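/- arXiv:2404.01307 — 12 statements merged into one kernel-verified Lean document; each statement's English description precedes it below -/
import Mathlib

section
/- (Sufficiency part of the main Theorem.) Let m, n₀, n₁ be positive integers and suppose there exist positive integers l, k, s, r such that (i) n₁ = l·(m·k − 1), (ii) s·n₁ = k·l + r·n₀, and (iii) r divides s·k·l. Then the polynomials x(λ) = k·(n₀ + n₁·λ), z(λ) = (k·l/r)·(s + r·λ), y(λ) = (n₀ + n₁·λ)·(s + r·λ) have integer coefficients, satisfy x(t) > 0, y(t) > 0, z(t) > 0 for every natural number t, and form an integer polynomial solution of equation (2), i.e. m/(n₀ + n₁·t) = 1/x(t) + 1/y(t) + 1/z(t) for every natural number t. -/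
/-!
Write `N = n₀ + n₁λ` and `S = s + rλ`. Conditions (i) and (ii) combine to
`rN + kl = n₁S = l(mk - 1)S`; dividing by `klNS` gives `m/N = 1/(kN) + 1/(NS) + r/(klS)`,
and (iii) makes `z = klS/r` integral.
-/

open Polynomial

/-- `x, y, z ∈ ℤ[λ]` form an integer polynomial solution of equation (2)
for parameters `m, n₀, n₁`: they take positive values on the naturals and
satisfy `m·x·y·z = (n₀ + n₁·λ)·(x·y + x·z + y·z)` as polynomials. -/
def IsIntPolySolution (m n₀ n₁ : ℤ) (x y z : Polynomial ℤ) : Prop :=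
  (∀ t : ℕ, 0 < x.eval (t : ℤ)) ∧ (∀ t : ℕ, 0 < y.eval (t : ℤ)) ∧
  (∀ t : ℕ, 0 < z.eval (t : ℤ)) ∧
  C m * (x * y * z) = (C n₀ + C n₁ * X) * (x * y + x * z + y * z)

theorem div_eq_one_div_add_one_div_add_one_div {K : Type*} [Field K] {m N x y z : K}
    (hN : N ≠ 0) (hx : x ≠ 0) (hy : y ≠ 0) (hz : z ≠ 0)
    (h : m * (x * y * z) = N * (x * y + x * z + y * z)) :
    m / N = 1 / x + 1 / y + 1 / z := by
  field_simp
  linear_combination h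

/-- Cleared denominators in `m/N = 1/(kN) + 1/(NS) + 1/z`, where `z = klS/r`. -/
theorem mul_prod_eq_mul_pairwise_sum_of_relations {R : Type*} [CommRing R] [IsDomain R]
    {m k l r N S z : R}
    (hr : r ≠ 0) (hz : r * z = k * l * S) (hN : r * N + k * l = l * (m * k - 1) * S) :
    m * (k * N * (N * S) * z) = N * (k * N * (N * S) + k * N * z + N * S * z) := by
  apply mul_left_cancel₀ hr
  linear_combination
    (m * (k * N) * (N * S) - N * (k * N) - N * (N * S)) * hz - k * N ^ 2 * S * hN

theorem eval_C_add_C_mul_X_pos {a b : ℤ} (ha : 0 < a) (hb : 0 ≤ b) (t : ℕ) :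
    0 < (C a + C b * X).eval (t : ℤ) := by
  simp only [eval_add, eval_mul, eval_C, eval_X]
  positivity

theorem IsIntPolySolution.div_eq {m n₀ n₁ : ℤ} {x y z : ℤ[X]}
    (h : IsIntPolySolution m n₀ n₁ x y z) (hn₀ : 0 < n₀) (hn₁ : 0 ≤ n₁) (t : ℕ) :
    (m : ℚ) / ((n₀ : ℚ) + (n₁ : ℚ) * t) =
      1 / ((x.eval (t : ℤ) : ℤ) : ℚ) + 1 / ((y.eval (t : ℤ) : ℤ) : ℚ) +
        1 / ((z.eval (t : ℤ) : ℤ) : ℚ) := by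
  obtain ⟨hx, hy, hz, hxyz⟩ := h
  have hxyzQ := congrArg (fun p => ((p.eval (t : ℤ) : ℤ) : ℚ)) hxyz
  simp only [eval_mul, eval_add, eval_C, eval_X, Int.cast_mul, Int.cast_add,
    Int.cast_natCast] at hxyzQ
  have hN : (0 : ℚ) < n₀ + n₁ * t := by positivity
  exact div_eq_one_div_add_one_div_add_one_div hN.ne' (by exact_mod_cast (hx t).ne')
    (by exact_mod_cast (hy t).ne') (by exact_mod_cast (hz t).ne') hxyzQ

theorem sufficiency_general (m n₀ n₁ l k s r : ℤ)
    (hn₀ : 0 < n₀) (hn₁ : 0 < n₁)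
    (hl : 0 < l) (hk : 0 < k) (hs : 0 < s) (hr : 0 < r)
    (hi : n₁ = l * (m * k - 1))
    (hii : s * n₁ = k * l + r * n₀)
    (hiii : r ∣ s * k * l) :
    IsIntPolySolution m n₀ n₁
      (C k * (C n₀ + C n₁ * X))
      ((C n₀ + C n₁ * X) * (C s + C r * X))
      (C (k * l * s / r) + C (k * l) * X) ∧
    ∀ t : ℕ, (m : ℚ) / ((n₀ : ℚ) + (n₁ : ℚ) * t) =
      1 / (((C k * (C n₀ + C n₁ * X)).eval (t : ℤ) : ℤ) : ℚ) +
      1 / ((((C n₀ + C n₁ * X) * (C s + C r * X)).eval (t : ℤ) : ℤ) : ℚ) +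
      1 / (((C (k * l * s / r) + C (k * l) * X).eval (t : ℤ) : ℤ) : ℚ) := by
  obtain ⟨d, hd⟩ := hiii
  have hd_eq : k * l * s / r = d := by
    rw [show k * l * s = r * d by linarith, Int.mul_ediv_cancel_left _ hr.ne']
  have hd_pos : 0 < d := pos_of_mul_pos_right (hd ▸ by positivity) hr.le
  rw [hd_eq]
  have hsol : IsIntPolySolution m n₀ n₁ (C k * (C n₀ + C n₁ * X))
      ((C n₀ + C n₁ * X) * (C s + C r * X)) (C d + C (k * l) * X) := by
    refine ⟨fun t => ?_, fun t => ?_, fun t => ?_, ?_⟩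
    · rw [eval_mul, eval_C]
      exact mul_pos hk (eval_C_add_C_mul_X_pos hn₀ hn₁.le t)
    · rw [eval_mul]
      exact mul_pos (eval_C_add_C_mul_X_pos hn₀ hn₁.le t) (eval_C_add_C_mul_X_pos hs hr.le t)
    · exact eval_C_add_C_mul_X_pos hd_pos (by positivity) t
    · refine mul_prod_eq_mul_pairwise_sum_of_relations (l := C l) (r := C r)
        (S := C s + C r * X) (C_ne_zero.mpr hr.ne') ?_ ?_
      · have hdC := congrArg C hd
        simp only [map_mul] at hdC ⊢
        linear_combination -hdC
      · have hiC := congrArg C hi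
        have hiiC := congrArg C hii
        simp only [map_mul, map_add, map_sub, map_one] at hiC hiiC ⊢
        linear_combination (C s + C r * X) * hiC - hiiC
  exact ⟨hsol, hsol.div_eq hn₀ hn₁.le⟩

/-- Sufficiency part of the main Theorem. -/
theorem sufficiency (m n₀ n₁ l k s r : ℤ)
    (hm : 0 < m) (hn₀ : 0 < n₀) (hn₁ : 0 < n₁)
    (hl : 0 < l) (hk : 0 < k) (hs : 0 < s) (hr : 0 < r)
    (hi : n₁ = l * (m * k - 1))
    (hii : s * n₁ = k * l + r * n₀)
    (hiii : r ∣ s * k * l) :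
    IsIntPolySolution m n₀ n₁
      (C k * (C n₀ + C n₁ * X))
      ((C n₀ + C n₁ * X) * (C s + C r * X))
      (C (k * l * s / r) + C (k * l) * X) ∧
    ∀ t : ℕ, (m : ℚ) / ((n₀ : ℚ) + (n₁ : ℚ) * t) =
      1 / (((C k * (C n₀ + C n₁ * X)).eval (t : ℤ) : ℤ) : ℚ) +
      1 / ((((C n₀ + C n₁ * X) * (C s + C r * X)).eval (t : ℤ) : ℤ) : ℚ) +
      1 / (((C (k * l * s / r) + C (k * l) * X).eval (t : ℤ) : ℤ) : ℚ) :=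
  sufficiency_general m n₀ n₁ l k s r hn₀ hn₁ hl hk hs hr hi hii hiii
end

section
/- (Necessity part of the main Theorem.) Let m, n₀, n₁ be positive integers with m ≥ 4, gcd(n₀, n₁) = 1 and gcd(n₁, m) = 1. If equation (2) has an integer polynomial solution x, y, z, then there exist positive integers l, k, s, r satisfying (i) n₁ = l·(m·k − 1), (ii) s·n₁ = k·l + r·n₀, and (iii) r divides s·k·l, and moreover, after a suitable permutation of x, y, z, the solution has the form x(λ) = k·(n₀ + n₁·λ), z(λ) = (k·l/r)·(s + r·λ), y(λ) = (n₀ + n₁·λ)·(s + r·λ). -/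
/-!
Write `n = n₀ + n₁ λ`. Since `gcd (n₀, n₁) = 1`, `n` is a prime of `ℤ[λ]`; it divides `m x y z`
but not `m`, so it divides one unknown, say `x = n x₁`. Cancelling `n` gives
`m x₁ y z = n x₁ (y + z) + y z`, so `n` divides `y`, `z` or `m x₁ - 1`. The last is impossible:
modulo `m` it would make `n` a unit of `(ℤ/m)[λ]`, whose coefficient `n₁` is a unit, hence not
nilpotent. So two unknowns are multiples of `n`, say `x = n x₁` and `y = n y₁`, and
`m x₁ y₁ z = n x₁ y₁ + (x₁ + y₁) z`. If `x₁` and `y₁` were both nonconstant, the leading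
coefficients would give `m ∣ n₁`; so `x₁ = k` is a constant, and `y₁ ((m k - 1) z - k n) = k z`.
A constant `y₁ = k'` would give `(m k k' - k - k') z = k k' n`, hence `m k k' - k - k' ∣ k k'` as
`n` is primitive, which fails for `m ≥ 4`. Counting degrees then shows that `y₁ = s + r λ` and `z`
are linear and `(m k - 1) z - k n` is a constant, and `l, s, r` are read off the coefficients.
-/

open Polynomial

theorem Polynomial.IsPrimitive.dvd_of_C_dvd_C_mul {R : Type*} [CommRing R] [IsDomain R]
    [StrongNormalizedGCDMonoid R] {p : R[X]} (hp : p.IsPrimitive) {a c : R}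
    (h : C c ∣ C a * p) : c ∣ a := by
  rwa [← dvd_content_iff_C_dvd, content_C_mul, hp.content_eq_one, mul_one,
    dvd_normalize_iff] at h

def IsStandardForm (m n₀ n₁ : ℤ) (S : Multiset ℤ[X]) : Prop :=
  ∃ l k s r : ℤ, 0 < l ∧ 0 < k ∧ 0 < s ∧ 0 < r ∧ n₁ = l * (m * k - 1) ∧
    s * n₁ = k * l + r * n₀ ∧ r ∣ s * k * l ∧
    S = {C k * (C n₀ + C n₁ * X), C (k * l * s / r) + C (k * l) * X,
      (C n₀ + C n₁ * X) * (C s + C r * X)}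

lemma exists_standard_params {m n₀ n₁ k s r z₀ z₁ : ℤ} (hn₁ : 0 < n₁) (hk : 0 < k)
    (hmk : 0 < m * k - 1) (hs : 0 < s) (hz₀ : 0 < z₀) (hz₁ : (m * k - 1) * z₁ = k * n₁)
    (hsw : s * ((m * k - 1) * z₀ - k * n₀) = k * z₀)
    (hrw : r * ((m * k - 1) * z₀ - k * n₀) = k * z₁) :
    ∃ l, 0 < l ∧ 0 < r ∧ n₁ = l * (m * k - 1) ∧ s * n₁ = k * l + r * n₀ ∧ r ∣ s * k * l ∧
      z₀ = k * l * s / r ∧ z₁ = k * l := by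
  set w := (m * k - 1) * z₀ - k * n₀ with hw
  have hw_pos : 0 < w := pos_of_mul_pos_right (hsw ▸ mul_pos hk hz₀) hs.le
  have hz₁_pos : 0 < z₁ := pos_of_mul_pos_right (hz₁ ▸ mul_pos hk hn₁) hmk.le
  have hr : 0 < r := pos_of_mul_pos_left (hrw ▸ mul_pos hk hz₁_pos) hw_pos.le
  obtain ⟨l, hl⟩ : m * k - 1 ∣ n₁ :=
    (show IsCoprime (m * k - 1) k from ⟨-1, m, by ring⟩).dvd_of_dvd_mul_left ⟨z₁, hz₁.symm⟩
  have hz₁l : z₁ = k * l := mul_left_cancel₀ hmk.ne' (by linear_combination hz₁ + k * hl)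
  have hskl : s * k * l = r * z₀ :=
    mul_left_cancel₀ hk.ne' (by linear_combination r * hsw - s * hrw - k * s * hz₁l)
  refine ⟨l, pos_of_mul_pos_right (hl ▸ hn₁) hmk.le, hr, by linear_combination hl, ?_,
    ⟨z₀, hskl⟩, ?_, hz₁l⟩
  · refine mul_right_cancel₀ hw_pos.ne' ?_
    linear_combination n₁ * hsw - n₀ * hrw - n₀ * k * hz₁l + k * z₀ * hl - k * l * hw
  · rw [show k * l * s = r * z₀ by linear_combination hskl, Int.mul_ediv_cancel_left _ hr.ne']

section

variable {m n₀ n₁ : ℤ}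

local notation "𝔫" => (C n₀ + C n₁ * X : ℤ[X])

lemma natDegree_C_add_C_mul_X (hn₁ : n₁ ≠ 0) : natDegree 𝔫 = 1 := by
  rw [add_comm]; exact natDegree_linear hn₁

lemma leadingCoeff_C_add_C_mul_X (hn₁ : n₁ ≠ 0) : leadingCoeff 𝔫 = n₁ := by
  rw [add_comm]; exact leadingCoeff_linear hn₁

lemma coeff_C_add_C_mul_X_zero : coeff 𝔫 0 = n₀ := by
  rw [coeff_add, coeff_C_zero, coeff_C_mul_X, if_neg zero_ne_one, add_zero]

lemma coeff_C_add_C_mul_X_one : coeff 𝔫 1 = n₁ := by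
  rw [coeff_add, coeff_C_mul_X, coeff_C, if_neg one_ne_zero, if_pos rfl, zero_add]

lemma C_add_C_mul_X_ne_zero (hn₁ : n₁ ≠ 0) : 𝔫 ≠ 0 :=
  fun h => hn₁ (by rw [← coeff_C_add_C_mul_X_one (n₀ := n₀) (n₁ := n₁), h, coeff_zero])

lemma irreducible_C_add_C_mul_X (hn₁ : n₁ ≠ 0) (hcop : Int.gcd n₀ n₁ = 1) :
    Irreducible 𝔫 := by
  rw [add_comm]
  refine irreducible_C_mul_X_add_C hn₁ (IsCoprime.isRelPrime ?_)
  rw [Int.isCoprime_iff_gcd_eq_one, Int.gcd_comm, hcop]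

lemma isPrimitive_C_add_C_mul_X (hn₁ : n₁ ≠ 0) (hcop : Int.gcd n₀ n₁ = 1) : IsPrimitive 𝔫 :=
  (irreducible_C_add_C_mul_X hn₁ hcop).isPrimitive (by rw [natDegree_C_add_C_mul_X hn₁]; exact one_ne_zero)

lemma prime_C_add_C_mul_X (hn₁ : n₁ ≠ 0) (hcop : Int.gcd n₀ n₁ = 1) : Prime 𝔫 :=
  (irreducible_C_add_C_mul_X hn₁ hcop).prime

lemma C_add_C_mul_X_not_dvd_C (hn₁ : n₁ ≠ 0) {c : ℤ} (hc : c ≠ 0) : ¬ 𝔫 ∣ C c := fun h => by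
  have := natDegree_le_of_dvd h (C_ne_zero.mpr hc)
  rw [natDegree_C_add_C_mul_X hn₁, natDegree_C] at this
  omega

lemma C_add_C_mul_X_not_dvd_C_mul_sub_one (hm : 1 < m) (hcop' : Int.gcd n₁ m = 1) (p : ℤ[X]) :
    ¬ 𝔫 ∣ C m * p - 1 := by
  rintro ⟨u, hu⟩
  have : Fact (1 < m.natAbs) := ⟨by omega⟩
  set φ := Int.castRingHom (ZMod m.natAbs)
  have hm0 : φ m = 0 := (ZMod.intCast_zmod_eq_zero_iff_dvd _ _).mpr (by simp)
  have hunit : IsUnit (map φ 𝔫) := by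
    refine .of_mul_eq_one (-map φ u) ?_
    have := congrArg (map φ) hu
    simp only [Polynomial.map_sub, Polynomial.map_mul, map_C, hm0, C_0, zero_mul, zero_sub,
      Polynomial.map_one] at this
    rw [mul_neg, ← this, neg_neg]
  refine ((isUnit_iff_coeff_isUnit_isNilpotent.mp hunit).2 1 one_ne_zero).not_isUnit ?_
  rw [coeff_map, coeff_C_add_C_mul_X_one, eq_intCast, ZMod.coe_int_isUnit_iff_isCoprime,
    Int.natCast_natAbs, IsCoprime.abs_left_iff, isCoprime_comm, Int.isCoprime_iff_gcd_eq_one,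
    hcop']

lemma dvd_or_dvd_of_dvd (hm : 1 < m) (hcop' : Int.gcd n₁ m = 1) (hp : Prime 𝔫)
    {x y z : ℤ[X]} (h : C m * (x * y * z) = 𝔫 * (x * y + x * z + y * z)) (hdx : 𝔫 ∣ x) :
    𝔫 ∣ y ∨ 𝔫 ∣ z := by
  obtain ⟨x₁, rfl⟩ := hdx
  have hred : C m * (x₁ * (y * z)) = 𝔫 * (x₁ * (y + z)) + y * z :=
    mul_left_cancel₀ hp.ne_zero (by linear_combination h)
  have hdvd : 𝔫 ∣ y * z * (C m * x₁ - 1) := ⟨x₁ * (y + z), by linear_combination hred⟩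
  exact hp.dvd_or_dvd ((hp.dvd_or_dvd hdvd).resolve_right
    (C_add_C_mul_X_not_dvd_C_mul_sub_one hm hcop' x₁))

lemma exists_two_dvd (hn₁ : n₁ ≠ 0) (hm : 1 < m) (hcop' : Int.gcd n₁ m = 1) (hp : Prime 𝔫)
    {x y z : ℤ[X]} (h : C m * (x * y * z) = 𝔫 * (x * y + x * z + y * z)) :
    (𝔫 ∣ x ∧ 𝔫 ∣ y) ∨ (𝔫 ∣ x ∧ 𝔫 ∣ z) ∨ (𝔫 ∣ y ∧ 𝔫 ∣ z) := by
  have hxyz : 𝔫 ∣ x * (y * z) := by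
    rw [← mul_assoc]
    exact (hp.dvd_or_dvd ⟨_, h⟩).resolve_left (C_add_C_mul_X_not_dvd_C hn₁ (by omega))
  rcases hp.dvd_or_dvd hxyz with hdx | hdyz
  · rcases dvd_or_dvd_of_dvd hm hcop' hp h hdx with hdy | hdz <;> tauto
  rcases hp.dvd_or_dvd hdyz with hdy | hdz
  · rcases dvd_or_dvd_of_dvd hm hcop' hp (x := y) (y := x) (z := z) (by linear_combination h)
      hdy with hdx | hdz <;> tauto
  · rcases dvd_or_dvd_of_dvd hm hcop' hp (x := z) (y := x) (z := y) (by linear_combination h)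
      hdz with hdx | hdy <;> tauto

lemma natDegree_eq_zero_or_natDegree_eq_zero (hm : m ≠ 0) (hmn : ¬ m ∣ n₁)
    {x₁ y₁ z : ℤ[X]} (hx₁ : x₁ ≠ 0) (hy₁ : y₁ ≠ 0) (hz : z ≠ 0)
    (h : C m * (x₁ * y₁ * z) = 𝔫 * (x₁ * y₁) + (x₁ + y₁) * z) :
    x₁.natDegree = 0 ∨ y₁.natDegree = 0 := by
  by_contra! ⟨hx₁deg, hy₁deg⟩
  have hn₁ : n₁ ≠ 0 := by rintro rfl; exact hmn (dvd_zero m)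
  have hdeg : (C m * (x₁ * y₁ * z)).natDegree =
      x₁.natDegree + y₁.natDegree + z.natDegree := by
    rw [natDegree_C_mul hm, natDegree_mul (mul_ne_zero hx₁ hy₁) hz, natDegree_mul hx₁ hy₁]
  have hlt : ((x₁ + y₁) * z).degree < (C m * (x₁ * y₁ * z)).degree := by
    refine degree_lt_degree (natDegree_mul_le.trans_lt ?_)
    have := natDegree_add_le x₁ y₁
    omega
  have hlc := leadingCoeff_sub_of_degree_lt hlt
  rw [show C m * (x₁ * y₁ * z) - (x₁ + y₁) * z = 𝔫 * (x₁ * y₁) by rw [h]; ring] at hlc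
  simp only [leadingCoeff_mul, leadingCoeff_C, leadingCoeff_C_add_C_mul_X hn₁] at hlc
  refine hmn ⟨z.leadingCoeff, mul_right_cancel₀ (b := x₁.leadingCoeff * y₁.leadingCoeff) ?_ ?_⟩
  · simp [hx₁, hy₁]
  · linear_combination hlc

lemma natDegree_pos_of_eq_C_mul (hm : 4 ≤ m) (hn₁ : n₁ ≠ 0) (hcop : Int.gcd n₀ n₁ = 1)
    {k : ℤ} {y₁ z : ℤ[X]} (hk : 0 < k) (hy₁ : 0 < y₁.eval 0)
    (h : C m * (C k * y₁ * z) = 𝔫 * (C k * y₁) + (C k + y₁) * z) : 0 < y₁.natDegree := by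
  by_contra! hy₁deg
  rw [eq_C_of_natDegree_le_zero hy₁deg, coeff_zero_eq_eval_zero] at h
  set k' := y₁.eval 0
  have hdvd : C (m * k * k' - k - k') ∣ C (k * k') * 𝔫 :=
    ⟨z, by simp only [C_sub, C_mul]; linear_combination -h⟩
  have hle := Int.le_of_dvd (by positivity)
    ((isPrimitive_C_add_C_mul_X hn₁ hcop).dvd_of_C_dvd_C_mul hdvd)
  nlinarith [mul_le_mul_of_nonneg_right hm (mul_pos hk hy₁).le,
    mul_nonneg (show (0 : ℤ) ≤ k - 1 by omega) (show (0 : ℤ) ≤ k' - 1 by omega)]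

lemma natDegree_le_one_of_mul_eq (hn₁ : n₁ ≠ 0) {a k : ℤ} (ha : a ≠ 0) (hk : k ≠ 0)
    {y₁ z : ℤ[X]} (hz : z ≠ 0) (hy₁ : 0 < y₁.natDegree)
    (h : y₁ * (C a * z - C k * 𝔫) = C k * z) :
    y₁.natDegree ≤ 1 ∧ z.natDegree ≤ 1 ∧ (C a * z - C k * 𝔫).natDegree = 0 := by
  set W := C a * z - C k * 𝔫
  have hW : W ≠ 0 := by
    rintro hW; rw [hW, mul_zero, eq_comm, mul_eq_zero, C_eq_zero] at h; tauto
  have hsum := congrArg natDegree h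
  rw [natDegree_mul (by rintro rfl; simp at hy₁) hW, natDegree_C_mul hk] at hsum
  suffices z.natDegree ≤ 1 by omega
  by_contra! hz2
  have hcoeff : W.coeff z.natDegree = a * z.leadingCoeff := by
    rw [coeff_sub, coeff_C_mul, coeff_C_mul, leadingCoeff,
      coeff_eq_zero_of_natDegree_lt (p := 𝔫) (by rwa [natDegree_C_add_C_mul_X hn₁]),
      mul_zero, sub_zero]
  have := le_natDegree_of_ne_zero (p := W) (n := z.natDegree) (by simp [hcoeff, ha, hz])
  omega

lemma isStandardForm_of_eq_C_mul (hm : 4 ≤ m) (hn₁ : 0 < n₁) (hcop : Int.gcd n₀ n₁ = 1)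
    {k : ℤ} {y₁ z : ℤ[X]} (hk : 0 < k) (hy₁ : 0 < y₁.eval 0) (hz : 0 < z.eval 0)
    (h : C m * (C k * y₁ * z) = 𝔫 * (C k * y₁) + (C k + y₁) * z) :
    IsStandardForm m n₀ n₁ {C k * 𝔫, 𝔫 * y₁, z} := by
  have hmk : 0 < m * k - 1 := by nlinarith
  have hW : y₁ * (C (m * k - 1) * z - C k * 𝔫) = C k * z := by
    simp only [C_sub, C_mul, C_1]; linear_combination h
  obtain ⟨hy₁deg, hzdeg, hWdeg⟩ := natDegree_le_one_of_mul_eq hn₁.ne' hmk.ne' hk.ne'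
    (by rintro rfl; simp at hz) (natDegree_pos_of_eq_C_mul hm hn₁.ne' hcop hk hy₁ h) hW
  have hz₁ : (m * k - 1) * z.coeff 1 = k * n₁ := by
    have := coeff_eq_zero_of_natDegree_lt (n := 1) (hWdeg.trans_lt one_pos)
    rwa [coeff_sub, coeff_C_mul, coeff_C_mul, coeff_C_add_C_mul_X_one, sub_eq_zero] at this
  rw [eq_C_of_natDegree_eq_zero hWdeg, coeff_sub, coeff_C_mul, coeff_C_mul,
    coeff_C_add_C_mul_X_zero] at hW
  have hsw := congrArg (coeff · 0) hW
  have hrw := congrArg (coeff · 1) hW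
  simp only [coeff_mul_C, coeff_C_mul] at hsw hrw
  rw [← coeff_zero_eq_eval_zero] at hy₁ hz
  obtain ⟨l, hl, hr, hn₁l, hs, hdvd, hz₀, hz₁l⟩ :=
    exists_standard_params hn₁ hk hmk hy₁ hz hz₁ hsw hrw
  refine ⟨l, k, y₁.coeff 0, y₁.coeff 1, hl, hk, hy₁, hr, hn₁l, hs, hdvd, ?_⟩
  have hz_eq := eq_X_add_C_of_natDegree_le_one hzdeg
  rw [hz₀, hz₁l, add_comm] at hz_eq
  conv_lhs => rw [eq_X_add_C_of_natDegree_le_one hy₁deg, hz_eq]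
  rw [add_comm (C (y₁.coeff 1) * X)]
  exact congrArg _ (Multiset.pair_comm _ _)

lemma isStandardForm_of_dvd_of_dvd (hm : 4 ≤ m) (hn₀ : 0 < n₀) (hn₁ : 0 < n₁)
    (hcop : Int.gcd n₀ n₁ = 1) (hmn : ¬ m ∣ n₁) {x y z : ℤ[X]} (hx : 0 < x.eval 0)
    (hy : 0 < y.eval 0) (hz : 0 < z.eval 0)
    (h : C m * (x * y * z) = 𝔫 * (x * y + x * z + y * z)) (hdx : 𝔫 ∣ x) (hdy : 𝔫 ∣ y) :
    IsStandardForm m n₀ n₁ {x, y, z} := by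
  obtain ⟨x₁, rfl⟩ := hdx
  obtain ⟨y₁, rfl⟩ := hdy
  simp only [eval_mul, eval_add, eval_C, eval_X, mul_zero, add_zero] at hx hy
  replace hx := pos_of_mul_pos_right hx hn₀.le
  replace hy := pos_of_mul_pos_right hy hn₀.le
  have hred : C m * (x₁ * y₁ * z) = 𝔫 * (x₁ * y₁) + (x₁ + y₁) * z :=
    mul_left_cancel₀ (a := 𝔫 ^ 2) (pow_ne_zero 2 (C_add_C_mul_X_ne_zero hn₁.ne'))
      (by linear_combination h)
  rcases natDegree_eq_zero_or_natDegree_eq_zero (by omega) hmn (by rintro rfl; simp at hx)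
    (by rintro rfl; simp at hy) (by rintro rfl; simp at hz) hred with hx₁ | hy₁
  · rw [eq_C_of_natDegree_eq_zero hx₁, coeff_zero_eq_eval_zero] at hred ⊢
    rw [mul_comm 𝔫]
    exact isStandardForm_of_eq_C_mul hm hn₁ hcop hx hy hz hred
  · rw [eq_C_of_natDegree_eq_zero hy₁, coeff_zero_eq_eval_zero] at hred ⊢
    rw [Multiset.insert_eq_cons, Multiset.insert_eq_cons, Multiset.cons_swap, mul_comm 𝔫]
    exact isStandardForm_of_eq_C_mul hm hn₁ hcop hy hx hz (by linear_combination hred)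

end

/-- Necessity part of the main Theorem: any integer polynomial solution forces the
existence of parameters `l, k, s, r` satisfying conditions i)–iii), and up to a
permutation of `x, y, z` the solution has the stated form. -/
theorem necessity (m n₀ n₁ : ℤ) (hm : 4 ≤ m) (hn₀ : 0 < n₀) (hn₁ : 0 < n₁)
    (hcop : Int.gcd n₀ n₁ = 1) (hcop' : Int.gcd n₁ m = 1)
    (x y z : Polynomial ℤ) (hsol : IsIntPolySolution m n₀ n₁ x y z) :
    ∃ l k s r : ℤ, 0 < l ∧ 0 < k ∧ 0 < s ∧ 0 < r ∧
      n₁ = l * (m * k - 1) ∧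
      s * n₁ = k * l + r * n₀ ∧
      r ∣ s * k * l ∧
      ({x, y, z} : Multiset (Polynomial ℤ)) =
        {C k * (C n₀ + C n₁ * X),
         C (k * l * s / r) + C (k * l) * X,
         (C n₀ + C n₁ * X) * (C s + C r * X)} := by
  obtain ⟨hx, hy, hz, h⟩ := hsol
  replace hx : 0 < x.eval 0 := by simpa using hx 0
  replace hy : 0 < y.eval 0 := by simpa using hy 0
  replace hz : 0 < z.eval 0 := by simpa using hz 0
  have hmn : ¬ m ∣ n₁ := fun hdvd => by
    have := Int.isUnit_iff.mp
      ((Int.isCoprime_iff_gcd_eq_one.mpr hcop').isUnit_of_dvd' hdvd dvd_rfl)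
    omega
  have key := @isStandardForm_of_dvd_of_dvd m n₀ n₁ hm hn₀ hn₁ hcop hmn
  rcases exists_two_dvd hn₁.ne' (by omega) hcop' (prime_C_add_C_mul_X hn₁.ne' hcop) h with
    ⟨hdx, hdy⟩ | ⟨hdx, hdz⟩ | ⟨hdy, hdz⟩
  · exact key hx hy hz h hdx hdy
  · rw [show ({x, y, z} : Multiset ℤ[X]) = {x, z, y} from congrArg _ (Multiset.pair_comm _ _)]
    exact key hx hz hy (by linear_combination h) hdx hdz
  · rw [show ({x, y, z} : Multiset ℤ[X]) = {y, z, x} from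
      (Multiset.cons_swap x y {z}).trans (congrArg _ (Multiset.pair_comm x z))]
    exact key hy hz hx (by linear_combination h) hdy hdz
end

section
/- (Corollary 1.) Let m, n₀, n₁ be positive integers with m ≥ 4, gcd(n₀, n₁) = 1 and gcd(n₁, m) = 1. If there is no positive integer k such that m·k − 1 divides n₁, then equation (2) has no integer polynomial solution. -/
open Polynomial

section Aux

variable (m n₀ n₁ : ℤ)

private noncomputable abbrev NN : (Polynomial ℤ) := C n₀ + C n₁ * X

lemma NN_eq : NN n₀ n₁ = C n₁ * X + C n₀ := by ring

lemma NN_natDegree (h1 : n₁ ≠ 0) : (NN n₀ n₁).natDegree = 1 := by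
  rw [NN_eq]; exact natDegree_linear h1

lemma NN_leadingCoeff (h1 : n₁ ≠ 0) : (NN n₀ n₁).leadingCoeff = n₁ := by
  rw [NN_eq]; exact leadingCoeff_linear h1

lemma NN_eval (t : ℤ) : (NN n₀ n₁).eval t = n₀ + n₁ * t := by simp

lemma NN_pos (h0 : 0 < n₀) (h1 : 0 < n₁) (t : ℕ) : 0 < (NN n₀ n₁).eval (t : ℤ) := by
  rw [NN_eval]
  have : (0:ℤ) ≤ t := Int.natCast_nonneg t
  nlinarith

lemma NN_ne_zero (h0 : 0 < n₀) (h1 : 0 < n₁) : NN n₀ n₁ ≠ 0 := by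
  intro hc
  have := NN_pos n₀ n₁ h0 h1 0
  rw [hc] at this; simp at this

lemma NN_prime (h0 : 0 < n₀) (h1 : 0 < n₁) (hcop : Int.gcd n₀ n₁ = 1) :
    Prime (NN n₀ n₁) := by
  have hcop' : IsCoprime n₀ n₁ := Int.isCoprime_iff_gcd_eq_one.mpr hcop
  have hprim : (NN n₀ n₁).IsPrimitive := by
    intro r hr
    rw [C_dvd_iff_dvd_coeff] at hr
    have h0' : r ∣ n₀ := by have := hr 0; simpa using this
    have h1' : r ∣ n₁ := by
      have := hr 1
      rwa [coeff_add, coeff_C, if_neg one_ne_zero, coeff_C_mul, coeff_X_one,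
        mul_one, zero_add] at this
    exact hcop'.isUnit_of_dvd' h0' h1'
  rw [← UniqueFactorizationMonoid.irreducible_iff_prime]
  rw [Polynomial.IsPrimitive.Int.irreducible_iff_irreducible_map_cast hprim]
  have hq1 : ((n₁ : ℚ)) ≠ 0 := by exact_mod_cast h1.ne'
  have hmap : (NN n₀ n₁).map (Int.castRingHom ℚ) =
      C (n₁ : ℚ) * (X - C (-(n₀ : ℚ) / (n₁ : ℚ))) := by
    have h2 : (n₁:ℚ) * (-(n₀:ℚ)/(n₁:ℚ)) = -(n₀:ℚ) := by field_simp
    rw [mul_sub, ← C_mul, h2, map_neg, sub_neg_eq_add]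
    simp only [NN, Polynomial.map_add, Polynomial.map_mul, Polynomial.map_X, map_C,
      Int.coe_castRingHom]
    ring
  rw [hmap]
  exact (associated_unit_mul_left _ _
    (isUnit_C.mpr (isUnit_iff_ne_zero.mpr hq1))).symm.irreducible
    (irreducible_X_sub_C _)

end Aux

section Main

variable {m n₀ n₁ : ℤ}

/-- positivity transfer: if `N * p` is positive at naturals then so is `p`. -/
lemma pos_of_NN_mul (h0 : 0 < n₀) (h1 : 0 < n₁) {p : Polynomial ℤ}
    (hp : ∀ t : ℕ, 0 < (NN n₀ n₁ * p).eval (t : ℤ)) : ∀ t : ℕ, 0 < p.eval (t : ℤ) := by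
  intro t
  have h := hp t
  rw [eval_mul] at h
  have hN := NN_pos n₀ n₁ h0 h1 t
  nlinarith

/-- `N` cannot divide `C m * w - 1` when `gcd(n₁, m) = 1` and `m ≥ 4`. -/
lemma not_NN_dvd (hm : 4 ≤ m) (h1 : 0 < n₁) (hcop' : Int.gcd n₁ m = 1)
    (w : Polynomial ℤ) : ¬ (NN n₀ n₁ ∣ (C m * w - 1)) := by
  rintro ⟨s, hs⟩
  set M : ℕ := m.natAbs with hM
  have hM4 : 4 ≤ M := by omega
  haveI : NeZero M := ⟨by omega⟩
  haveI : Fact (1 < M) := ⟨by omega⟩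
  have hmM : (m : ℤ) = (M : ℤ) := by
    rw [hM, Int.natAbs_of_nonneg (by omega)]
  -- map everything to (ZMod M)[X]
  have hmap := congrArg (Polynomial.map (Int.castRingHom (ZMod M))) hs
  simp only [Polynomial.map_sub, Polynomial.map_mul, Polynomial.map_add,
    Polynomial.map_one, map_C, Polynomial.map_X, Int.coe_castRingHom] at hmap
  have hm0 : ((m : ZMod M)) = 0 := by
    rw [hmM, Int.cast_natCast]
    exact ZMod.natCast_self M
  rw [hm0] at hmap
  simp only [map_zero, zero_mul, zero_sub] at hmap
  -- hmap : -1 = (C n₀ + C n₁ * X) * map s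
  have hn₁unit : IsUnit ((n₁ : ZMod M)) := by
    have e1 : ((n₁ : ZMod M)) = ((n₁.natAbs : ℕ) : ZMod M) := by
      rw [show ((n₁.natAbs : ℕ) : ZMod M) = ((n₁.natAbs : ℤ) : ZMod M) from
        (Int.cast_natCast _).symm, Int.natAbs_of_nonneg h1.le]
    rw [e1, ZMod.isUnit_iff_coprime]
    exact hcop'
  have hn₁ne : ((n₁ : ZMod M)) ≠ 0 := hn₁unit.ne_zero
  set sb := s.map (Int.castRingHom (ZMod M)) with hsb
  have hsbne : sb ≠ 0 := by
    intro h0s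
    rw [h0s, mul_zero] at hmap
    exact one_ne_zero (neg_eq_zero.mp hmap)
  set Nb : (ZMod M)[X] := C ((n₀ : ZMod M)) + C ((n₁ : ZMod M)) * X with hNb
  have hNbdeg : Nb.natDegree = 1 := by
    rw [hNb, show C ((n₀ : ZMod M)) + C ((n₁ : ZMod M)) * X
      = C ((n₁ : ZMod M)) * X + C ((n₀ : ZMod M)) by ring]
    exact natDegree_linear hn₁ne
  have hNblc : Nb.leadingCoeff = (n₁ : ZMod M) := by
    rw [hNb, show C ((n₀ : ZMod M)) + C ((n₁ : ZMod M)) * X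
      = C ((n₁ : ZMod M)) * X + C ((n₀ : ZMod M)) by ring]
    exact leadingCoeff_linear hn₁ne
  have hlcne : Nb.leadingCoeff * sb.leadingCoeff ≠ 0 := by
    rw [hNblc]
    intro hcontra
    exact leadingCoeff_ne_zero.mpr hsbne ((hn₁unit.mul_right_eq_zero).mp hcontra)
  have hdeg := natDegree_mul' hlcne
  rw [hNbdeg] at hdeg
  have hthis : (-1 : (ZMod M)[X]).natDegree = 0 := by simp
  rw [hmap] at hthis
  omega

lemma lemM4 (hm : 4 ≤ m) (h0 : 0 < n₀) (h1 : 0 < n₁)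
    (h : ¬ ∃ k : ℤ, 0 < k ∧ (m * k - 1) ∣ n₁)
    (u v₁ w₁ q : Polynomial ℤ)
    (hv : ∀ t : ℕ, 0 < v₁.eval (t:ℤ)) (hw : ∀ t : ℕ, 0 < w₁.eval (t:ℤ))
    (hdw : w₁.natDegree = 0) (hq : q ≠ 0)
    (heq1 : C m * v₁ * w₁ - v₁ - w₁ = NN n₀ n₁ * q)
    (heq2 : u * q = w₁ * v₁) : False := by
  set k : ℤ := w₁.coeff 0 with hk
  have hw₁C : w₁ = C k := eq_C_of_natDegree_eq_zero hdw
  have hkpos : 0 < k := by have := hw 0; rwa [hw₁C, eval_C] at this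
  have hvne : v₁ ≠ 0 := fun hcon => by
    have := hv 0; rw [hcon] at this; simp at this
  have hlcv : v₁.leadingCoeff ≠ 0 := leadingCoeff_ne_zero.mpr hvne
  have hmk1 : m * k - 1 ≠ 0 := by nlinarith
  set b := v₁.natDegree with hb
  have hbpos : 1 ≤ b := by
    by_contra hcon
    push_neg at hcon
    interval_cases b
    · -- both constants
      have hv₁C : v₁ = C (v₁.coeff 0) := eq_C_of_natDegree_eq_zero hb.symm
      have hdegNq : (NN n₀ n₁ * q).natDegree = 0 := by
        rw [← heq1]
        conv_lhs => rw [hv₁C, hw₁C]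
        rw [show C m * C (v₁.coeff 0) * C k - C (v₁.coeff 0) - C k
          = C (m * v₁.coeff 0 * k - v₁.coeff 0 - k) by
            rw [C_sub, C_sub, C_mul, C_mul]]
        exact natDegree_C _
      rw [natDegree_mul (NN_ne_zero _ _ h0 h1) hq, NN_natDegree _ _ h1.ne'] at hdegNq
      omega
  set p : Polynomial ℤ := C m * v₁ * w₁ - v₁ - w₁ with hp
  have hpform : p = C (m*k) * v₁ - v₁ - C k := by
    rw [hp, hw₁C, C_mul]; ring
  have hcoeffb : p.coeff b = (m * k - 1) * v₁.leadingCoeff := by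
    rw [hpform, coeff_sub, coeff_sub, coeff_C_mul, coeff_C, if_neg (by omega)]
    show m * k * v₁.coeff v₁.natDegree - v₁.coeff v₁.natDegree - 0
      = (m * k - 1) * v₁.coeff v₁.natDegree
    ring
  have hdegle : p.natDegree ≤ b := by
    rw [hpform]
    refine le_trans (natDegree_sub_le _ _) (max_le (le_trans (natDegree_sub_le _ _)
      (max_le (natDegree_C_mul_le _ _) le_rfl)) ?_)
    exact le_trans (le_of_eq (natDegree_C k)) (Nat.zero_le b)
  have hcoeffne : p.coeff b ≠ 0 := by
    rw [hcoeffb]; exact mul_ne_zero hmk1 hlcv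
  have hdegeq : p.natDegree = b := le_antisymm hdegle (le_natDegree_of_ne_zero hcoeffne)
  have hlcp : p.leadingCoeff = (m * k - 1) * v₁.leadingCoeff := by
    show p.coeff p.natDegree = _
    rw [hdegeq, hcoeffb]
  have key1 : (m * k - 1) * v₁.leadingCoeff = n₁ * q.leadingCoeff := by
    rw [← hlcp, show p = NN n₀ n₁ * q from heq1, leadingCoeff_mul,
      NN_leadingCoeff _ _ h1.ne']
  have key2 : u.leadingCoeff * q.leadingCoeff = k * v₁.leadingCoeff := by
    have hcc := congrArg Polynomial.leadingCoeff heq2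
    rwa [leadingCoeff_mul, leadingCoeff_mul, hw₁C, leadingCoeff_C] at hcc
  have hqlc : q.leadingCoeff ≠ 0 := leadingCoeff_ne_zero.mpr hq
  have key3 : (m * k - 1) * u.leadingCoeff = n₁ * k := by
    apply mul_right_cancel₀ hqlc
    linear_combination (m * k - 1) * key2 + k * key1
  have hco : IsCoprime (m * k - 1) k := ⟨-1, m, by ring⟩
  exact h ⟨k, hkpos, hco.dvd_of_dvd_mul_right ⟨u.leadingCoeff, key3.symm⟩⟩

lemma lemM3 (hm : 4 ≤ m) (h0 : 0 < n₀) (h1 : 0 < n₁) (hcop' : Int.gcd n₁ m = 1)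
    (h : ¬ ∃ k : ℤ, 0 < k ∧ (m * k - 1) ∣ n₁)
    (u v₁ w₁ q : Polynomial ℤ)
    (hv : ∀ t : ℕ, 0 < v₁.eval (t:ℤ)) (hw : ∀ t : ℕ, 0 < w₁.eval (t:ℤ))
    (hq : q ≠ 0)
    (heq1 : C m * v₁ * w₁ - v₁ - w₁ = NN n₀ n₁ * q)
    (heq2 : u * q = w₁ * v₁) : False := by
  have hvne : v₁ ≠ 0 := fun hcon => by
    have := hv 0; rw [hcon] at this; simp at this
  have hwne : w₁ ≠ 0 := fun hcon => by
    have := hw 0; rw [hcon] at this; simp at this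
  have hlcv : v₁.leadingCoeff ≠ 0 := leadingCoeff_ne_zero.mpr hvne
  have hlcw : w₁.leadingCoeff ≠ 0 := leadingCoeff_ne_zero.mpr hwne
  rcases Nat.eq_zero_or_pos w₁.natDegree with hc | hc
  · exact lemM4 hm h0 h1 h u v₁ w₁ q hv hw hc hq heq1 heq2
  rcases Nat.eq_zero_or_pos v₁.natDegree with hb | hb
  · exact lemM4 hm h0 h1 h u w₁ v₁ q hw hv hb hq
      (by linear_combination heq1) (by linear_combination heq2)
  -- both nonconstant
  set b := v₁.natDegree with hbdef
  set c := w₁.natDegree with hcdef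
  set p : Polynomial ℤ := C m * v₁ * w₁ - v₁ - w₁ with hp
  have hcoeff : p.coeff (b + c) = m * (v₁.leadingCoeff * w₁.leadingCoeff) := by
    rw [hp, coeff_sub, coeff_sub,
      coeff_eq_zero_of_natDegree_lt (show b < b + c by omega),
      coeff_eq_zero_of_natDegree_lt (show c < b + c by omega),
      mul_assoc, coeff_C_mul, coeff_mul_degree_add_degree]
    ring
  have hdegle : p.natDegree ≤ b + c := by
    rw [hp]
    refine le_trans (natDegree_sub_le _ _) (max_le (le_trans (natDegree_sub_le _ _)
      (max_le ?_ (by omega))) (by omega))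
    rw [mul_assoc]
    refine le_trans (natDegree_C_mul_le _ _) ?_
    exact natDegree_mul_le
  have hcoeffne : p.coeff (b + c) ≠ 0 := by
    rw [hcoeff]
    exact mul_ne_zero (by omega) (mul_ne_zero hlcv hlcw)
  have hdegeq : p.natDegree = b + c := le_antisymm hdegle (le_natDegree_of_ne_zero hcoeffne)
  have hlcp : p.leadingCoeff = m * (v₁.leadingCoeff * w₁.leadingCoeff) := by
    show p.coeff p.natDegree = _
    rw [hdegeq, hcoeff]
  have key1 : m * (v₁.leadingCoeff * w₁.leadingCoeff) = n₁ * q.leadingCoeff := by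
    rw [← hlcp, show p = NN n₀ n₁ * q from heq1, leadingCoeff_mul,
      NN_leadingCoeff _ _ h1.ne']
  have key2 : u.leadingCoeff * q.leadingCoeff = w₁.leadingCoeff * v₁.leadingCoeff := by
    have hcc := congrArg Polynomial.leadingCoeff heq2
    rwa [leadingCoeff_mul, leadingCoeff_mul] at hcc
  have hqlc : q.leadingCoeff ≠ 0 := leadingCoeff_ne_zero.mpr hq
  have key3 : n₁ = m * u.leadingCoeff := by
    apply mul_right_cancel₀ hqlc
    linear_combination -key1 - m * key2
  have hcopI : IsCoprime n₁ m := Int.isCoprime_iff_gcd_eq_one.mpr hcop'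
  have hmunit : IsUnit m := hcopI.isUnit_of_dvd' ⟨u.leadingCoeff, key3⟩ dvd_rfl
  rcases Int.isUnit_iff.mp hmunit with h1' | h1' <;> omega

lemma lemM2 (hm : 4 ≤ m) (h0 : 0 < n₀) (h1 : 0 < n₁)
    (hcop : Int.gcd n₀ n₁ = 1) (hcop' : Int.gcd n₁ m = 1)
    (h : ¬ ∃ k : ℤ, 0 < k ∧ (m * k - 1) ∣ n₁)
    (u v w₁ : Polynomial ℤ)
    (hu : ∀ t : ℕ, 0 < u.eval (t:ℤ)) (hv : ∀ t : ℕ, 0 < v.eval (t:ℤ))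
    (hw : ∀ t : ℕ, 0 < w₁.eval (t:ℤ))
    (heq : C m * (u * v * w₁) = u * v + NN n₀ n₁ * (w₁ * (u + v)))
    (hdvd : NN n₀ n₁ ∣ v) : False := by
  have hNne := NN_ne_zero n₀ n₁ h0 h1
  obtain ⟨v₁, rfl⟩ := hdvd
  have hv₁ := pos_of_NN_mul h0 h1 hv
  have heq2 : C m * (u * v₁ * w₁) = u * v₁ + w₁ * u + NN n₀ n₁ * (w₁ * v₁) := by
    apply mul_left_cancel₀ hNne
    linear_combination heq
  have hup : u * (C m * v₁ * w₁ - v₁ - w₁) = NN n₀ n₁ * (w₁ * v₁) := by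
    linear_combination heq2
  rcases (NN_prime n₀ n₁ h0 h1 hcop).2.2 _ _ ⟨w₁ * v₁, hup⟩ with hdu | hdp
  · obtain ⟨u₁, rfl⟩ := hdu
    have hu₁ := pos_of_NN_mul h0 h1 hu
    have heq3 : u₁ * (C m * v₁ * w₁ - v₁ - w₁) = w₁ * v₁ := by
      apply mul_left_cancel₀ hNne
      linear_combination hup
    have e := congrArg (Polynomial.eval ((0:ℕ):ℤ)) heq3
    simp only [eval_mul, eval_sub, eval_C] at e
    have ha := hu₁ 0; have hb := hv₁ 0; have hc := hw 0
    set A := u₁.eval ((0:ℕ):ℤ) with hA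
    set B := v₁.eval ((0:ℕ):ℤ) with hB
    set Cc := w₁.eval ((0:ℕ):ℤ) with hCc
    have ha' : 1 ≤ A := ha
    have hb' : 1 ≤ B := hb
    have hc' : 1 ≤ Cc := hc
    have hgt : B * Cc < m * B * Cc - B - Cc := by
      nlinarith [mul_pos hb hc, mul_nonneg (sub_nonneg.mpr hb') (sub_nonneg.mpr hc')]
    have hmono : m * B * Cc - B - Cc ≤ A * (m * B * Cc - B - Cc) :=
      le_mul_of_one_le_left (by nlinarith [mul_pos hb hc]) ha'
    nlinarith [mul_pos hb hc]
  · obtain ⟨q, hq⟩ := hdp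
    have hqne : q ≠ 0 := by
      intro h0q
      rw [h0q, mul_zero] at hq
      have hwv : w₁ * v₁ = 0 := by
        rw [hq, mul_zero] at hup
        exact (mul_eq_zero.mp hup.symm).resolve_left hNne
      have hz := congrArg (Polynomial.eval ((0:ℕ):ℤ)) hwv
      rw [eval_mul, eval_zero] at hz
      nlinarith [hw 0, hv₁ 0]
    have heq4 : u * q = w₁ * v₁ := by
      apply mul_left_cancel₀ hNne
      linear_combination hup - u * hq
    exact lemM3 hm h0 h1 hcop' h u v₁ w₁ q hv₁ hw hqne hq heq4

lemma lemM (hm : 4 ≤ m) (h0 : 0 < n₀) (h1 : 0 < n₁)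
    (hcop : Int.gcd n₀ n₁ = 1) (hcop' : Int.gcd n₁ m = 1)
    (h : ¬ ∃ k : ℤ, 0 < k ∧ (m * k - 1) ∣ n₁)
    (u v w : Polynomial ℤ)
    (hu : ∀ t : ℕ, 0 < u.eval (t:ℤ)) (hv : ∀ t : ℕ, 0 < v.eval (t:ℤ))
    (hw : ∀ t : ℕ, 0 < w.eval (t:ℤ))
    (heq : C m * (u * v * w) = NN n₀ n₁ * (u * v + u * w + v * w))
    (hdvd : NN n₀ n₁ ∣ w) : False := by
  have hNne := NN_ne_zero n₀ n₁ h0 h1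
  obtain ⟨w₁, rfl⟩ := hdvd
  have hw₁ := pos_of_NN_mul h0 h1 hw
  have heqA : C m * (u * v * w₁) = u * v + NN n₀ n₁ * (w₁ * (u + v)) := by
    apply mul_left_cancel₀ hNne
    linear_combination heq
  have hpr := NN_prime n₀ n₁ h0 h1 hcop
  rcases hpr.2.2 _ _ (⟨w₁ * (u + v), by linear_combination heqA⟩ :
      NN n₀ n₁ ∣ u * v * (C m * w₁ - 1)) with huv | hdM
  · rcases hpr.2.2 _ _ huv with hdu | hdv'
    · exact lemM2 hm h0 h1 hcop hcop' h v u w₁ hv hu hw₁ (by linear_combination heqA) hdu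
    · exact lemM2 hm h0 h1 hcop hcop' h u v w₁ hu hv hw₁ heqA hdv'
  · exact not_NN_dvd hm h1 hcop' w₁ hdM

end Main
/-- Corollary 1: if no positive integer `k` makes `m·k − 1` a divisor of `n₁`,
then equation (2) has no integer polynomial solution. -/
theorem corollary1 (m n₀ n₁ : ℤ) (hm : 4 ≤ m) (hn₀ : 0 < n₀) (hn₁ : 0 < n₁)
    (hcop : Int.gcd n₀ n₁ = 1) (hcop' : Int.gcd n₁ m = 1)
    (h : ¬ ∃ k : ℤ, 0 < k ∧ (m * k - 1) ∣ n₁) :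
    ¬ ∃ x y z : Polynomial ℤ, IsIntPolySolution m n₀ n₁ x y z := by
  rintro ⟨x, y, z, hx, hy, hz, heq⟩
  have hpr := NN_prime n₀ n₁ hn₀ hn₁ hcop
  have heq' : C m * (x * y * z) = NN n₀ n₁ * (x * y + x * z + y * z) := heq
  have hdvd : NN n₀ n₁ ∣ x * y * z := by
    rcases hpr.2.2 (C m) (x * y * z) ⟨_, heq'⟩ with hc | hd
    · exfalso
      have hCmne : (C m : Polynomial ℤ) ≠ 0 := by
        simp only [ne_eq, C_eq_zero]; omega
      have := natDegree_le_of_dvd hc hCmne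
      rw [NN_natDegree _ _ hn₁.ne', natDegree_C] at this
      omega
    · exact hd
  rcases hpr.2.2 _ _ hdvd with hxy | hz'
  · rcases hpr.2.2 _ _ hxy with hx' | hy'
    · exact lemM hm hn₀ hn₁ hcop hcop' h y z x hy hz hx (by linear_combination heq') hx'
    · exact lemM hm hn₀ hn₁ hcop hcop' h x z y hx hz hy (by linear_combination heq') hy'
  · exact lemM hm hn₀ hn₁ hcop hcop' h x y z hx hy hz heq' hz'
end

section
/- (Corollary 2.) Let m, n₀, n₁ be positive integers with m ≥ 4, gcd(n₀, n₁) = 1 and gcd(n₁, m) = 1, and suppose n₁ is prime. If there is no positive integer k with n₁ = m·k − 1 (i.e. n₁ is not congruent to −1 modulo m), then equation (2) has no integer polynomial solution. -/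
open Polynomial

/-!
Polynomials that are positive on `ℕ` have positive leading coefficients, so the top terms of
`xy + xz + yz` cannot cancel. Order the solution so that `deg z ≤ deg y ≤ deg x`.
If `deg z < deg y`, the leading coefficients give `m · lc z = n₁`, against `gcd(n₁, m) = 1`.
If `deg z = deg y < deg x`, they give `m b c = n₁ (b + c)` for `b = lc y`, `c = lc z`; the prime
`n₁` does not divide `m`, so it divides `b` (say), and this forces `n₁ = m k - 1`.
If all degrees are equal, comparing degrees forces them to be at most `1`. Then the prime linear
polynomial `n = n₀ + n₁ λ` divides `x`, `y` and `z` in turn, and after writing them as constant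
multiples of `n` the equation becomes `m c d w = cd + cw + dw`, impossible for `m ≥ 4`.
-/

namespace Polynomial

theorem leadingCoeff_pos_of_forall_eval_natCast_pos {p : ℤ[X]}
    (hp : ∀ t : ℕ, 0 < p.eval (t : ℤ)) : 0 < p.leadingCoeff := by
  by_contra! hlc
  obtain hdeg | hdeg := p.natDegree.eq_zero_or_pos
  · have h0 := hp 0
    rw [eq_C_of_natDegree_eq_zero hdeg, eval_C] at h0
    rw [leadingCoeff, hdeg] at hlc
    omega
  · have hinj : Function.Injective (Int.castRingHom ℝ) := Int.cast_injective
    set q := p.map (Int.castRingHom ℝ)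
    have hq : Filter.Tendsto (fun t : ℕ ↦ q.eval (t : ℝ)) Filter.atTop Filter.atBot :=
      (tendsto_atBot_of_leadingCoeff_nonpos q
        (by rw [degree_map_eq_of_injective hinj, degree_eq_natDegree (ne_zero_of_natDegree_gt hdeg)]
            exact_mod_cast hdeg)
        (by rw [leadingCoeff_map_of_injective hinj, eq_intCast]; exact_mod_cast hlc)).comp
        tendsto_natCast_atTop_atTop
    obtain ⟨t, ht⟩ := (hq.eventually_lt_atBot 0).exists
    have hqt : q.eval (t : ℝ) = p.eval (t : ℤ) := by simp [q]
    have hpt : (0 : ℝ) < p.eval (t : ℤ) := by exact_mod_cast hp t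
    linarith

theorem leadingCoeff_mul_add_mul_add_mul_of_natDegree_lt {R : Type*} [CommSemiring R]
    [NoZeroDivisors R] {x y z : R[X]} (hx : x ≠ 0) (hy : y ≠ 0)
    (hzy : z.natDegree < y.natDegree) (hyx : y.natDegree ≤ x.natDegree) :
    (x * y + x * z + y * z).leadingCoeff = x.leadingCoeff * y.leadingCoeff := by
  rw [show x * y + x * z + y * z = x * y + (x + y) * z by ring, leadingCoeff_add_of_degree_lt',
    leadingCoeff_mul]
  refine degree_lt_degree ?_
  calc ((x + y) * z).natDegree ≤ (x + y).natDegree + z.natDegree := natDegree_mul_le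
    _ ≤ x.natDegree + z.natDegree := by
      gcongr; exact natDegree_add_le_of_degree_le le_rfl hyx
    _ < (x * y).natDegree := by rw [natDegree_mul hx hy]; omega

section OrderedRing

variable {R : Type*} [CommRing R] [LinearOrder R] [IsStrictOrderedRing R] {n p x y z : R[X]}

theorem exists_pos_eq_C_mul_of_dvd (hn : 0 < n.leadingCoeff) (hp : 0 < p.leadingCoeff)
    (hdeg : p.natDegree ≤ n.natDegree) (hdvd : n ∣ p) : ∃ c, 0 < c ∧ p = C c * n := by
  obtain ⟨q, rfl⟩ := hdvd
  have hq : q ≠ 0 := by rintro rfl; simp at hp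
  have hq0 : q.natDegree = 0 := by
    rw [natDegree_mul (leadingCoeff_ne_zero.mp hn.ne') hq] at hdeg; omega
  refine ⟨q.leadingCoeff, ?_, ?_⟩
  · rw [leadingCoeff_mul] at hp; exact pos_of_mul_pos_right hp hn.le
  · rw [mul_comm, leadingCoeff, hq0, ← eq_C_of_natDegree_eq_zero hq0]

theorem leadingCoeff_mul_add_mul_add_mul_of_natDegree_eq (hx : x ≠ 0) (hy : 0 < y.leadingCoeff)
    (hz : 0 < z.leadingCoeff) (hzy : z.natDegree = y.natDegree) (hyx : y.natDegree < x.natDegree) :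
    (x * y + x * z + y * z).leadingCoeff = x.leadingCoeff * (y.leadingCoeff + z.leadingCoeff) := by
  have hy0 : y ≠ 0 := leadingCoeff_ne_zero.mp hy.ne'
  have hz0 : z ≠ 0 := leadingCoeff_ne_zero.mp hz.ne'
  have hsum : (y + z).leadingCoeff = y.leadingCoeff + z.leadingCoeff :=
    leadingCoeff_add_of_degree_eq (by rw [degree_eq_natDegree hy0, degree_eq_natDegree hz0, hzy])
      (add_pos hy hz).ne'
  have hsum0 : y + z ≠ 0 := leadingCoeff_ne_zero.mp (hsum ▸ (add_pos hy hz).ne')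
  have hsumdeg : (y + z).natDegree = y.natDegree := by
    refine natDegree_eq_of_degree_eq ?_
    rw [degree_add_eq_of_leadingCoeff_add_ne_zero (add_pos hy hz).ne', degree_eq_natDegree hy0,
      degree_eq_natDegree hz0, hzy, max_self]
  rw [show x * y + x * z + y * z = x * (y + z) + y * z by ring, leadingCoeff_add_of_degree_lt',
    leadingCoeff_mul, hsum]
  refine degree_lt_degree ?_
  calc (y * z).natDegree ≤ y.natDegree + z.natDegree := natDegree_mul_le
    _ < x.natDegree + y.natDegree := by omega
    _ = (x * (y + z)).natDegree := by rw [natDegree_mul hx hsum0, hsumdeg]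

end OrderedRing

theorem dvd_of_C_mul_eq_mul {R : Type*} [CommRing R] [IsDomain R] {n p q : R[X]} {k : R}
    (hn : Prime n) (hn0 : 0 < n.natDegree) (hk : k ≠ 0) (h : C k * p = n * q) : n ∣ p :=
  (hn.dvd_or_dvd ⟨q, h⟩).resolve_left fun hnk ↦ by
    have := natDegree_le_of_dvd hnk (C_ne_zero.mpr hk)
    rw [natDegree_C] at this
    omega

theorem prime_C_add_C_mul_X {n₀ n₁ : ℤ} (hn₁ : n₁ ≠ 0) (hcop : IsCoprime n₀ n₁) :
    Prime (C n₀ + C n₁ * X) := by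
  rw [add_comm]
  exact (irreducible_C_mul_X_add_C hn₁ hcop.symm.isRelPrime).prime

end Polynomial

theorem Int.exists_eq_mul_sub_one_of_mul_mul_eq_mul_add {m p a b : ℤ} (hm : 3 ≤ m)
    (hp : Prime p) (hpm : ¬ p ∣ m) (ha : 0 < a) (hb : 0 < b) (h : m * a * b = p * (a + b)) :
    ∃ k, 0 < k ∧ p = m * k - 1 := by
  wlog hpa : p ∣ a generalizing a b
  · refine this hb ha (by linear_combination h) ?_
    obtain hpma | hpb := hp.dvd_or_dvd ⟨a + b, h⟩
    · exact absurd ((hp.dvd_or_dvd hpma).resolve_left hpm) hpa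
    · exact hpb
  have hp_pos : 0 < p := by nlinarith [mul_pos (mul_pos (by omega : (0 : ℤ) < m) ha) hb]
  obtain ⟨a, rfl⟩ := hpa
  have h₁ : b * (m * a - 1) = p * a := mul_left_cancel₀ hp_pos.ne' (by linear_combination h)
  obtain ⟨c, rfl⟩ : a ∣ b :=
    (show IsCoprime a (m * a - 1) from ⟨m, -1, by ring⟩).dvd_of_dvd_mul_right
      ⟨p, by linear_combination h₁⟩
  have ha0 : 0 < a := pos_of_mul_pos_right ha hp_pos.le
  have h₂ : p = c * (m * a - 1) := mul_left_cancel₀ ha0.ne' (by linear_combination -h₁)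
  rcases hp.irreducible.isUnit_or_isUnit h₂ with hc | hc <;> rw [Int.isUnit_iff] at hc
  · exact ⟨a, ha0, by rcases hc with rfl | rfl <;> nlinarith⟩
  · rcases hc with hc | hc <;> nlinarith

section Equation

variable {m n₁ : ℤ} {n x y z : ℤ[X]}

theorem false_of_natDegree_le_one (hm : 4 ≤ m) (hn : Prime n) (hn1 : n.natDegree = 1)
    (hnlc : 0 < n.leadingCoeff) (hx : 0 < x.leadingCoeff) (hy : 0 < y.leadingCoeff)
    (hz : 0 < z.leadingCoeff) (hdx : x.natDegree ≤ 1) (hdy : y.natDegree ≤ 1)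
    (hdz : z.natDegree ≤ 1) (heq : C m * (x * y * z) = n * (x * y + x * z + y * z)) : False := by
  have hn0 : n ≠ 0 := hn.ne_zero
  have hdvd {k : ℤ} {p q : ℤ[X]} (hk : k ≠ 0) (h : C k * p = n * q) : n ∣ p :=
    dvd_of_C_mul_eq_mul hn (by omega) hk h
  wlog hnx : n ∣ x generalizing x y z
  · obtain hnxy | hnz := hn.dvd_or_dvd (hdvd (by omega) heq)
    · obtain hnx' | hny := hn.dvd_or_dvd hnxy
      · exact hnx hnx'
      · exact this hy hx hz hdy hdx hdz (by linear_combination heq) hny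
    · exact this hz hx hy hdz hdx hdy (by linear_combination heq) hnz
  obtain ⟨c, hc, rfl⟩ := exists_pos_eq_C_mul_of_dvd hnlc hx (hn1 ▸ hdx) hnx
  have h₁ : C (m * c - 1) * (y * z) = n * (C c * (y + z)) :=
    mul_left_cancel₀ hn0 (by simp only [map_sub, map_mul, map_one]; linear_combination heq)
  wlog hny : n ∣ y generalizing y z
  · refine this hz hy hdz hdy (by linear_combination heq) (by linear_combination h₁) ?_
    exact (hn.dvd_or_dvd (hdvd (by nlinarith) h₁)).resolve_left hny
  obtain ⟨d, hd, rfl⟩ := exists_pos_eq_C_mul_of_dvd hnlc hy (hn1 ▸ hdy) hny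
  have hcd : 2 * (c * d) ≤ m * c * d - c - d := by
    nlinarith [mul_le_mul_of_nonneg_right hm (mul_pos hc hd).le]
  have h₂ : C (m * c * d - c - d) * z = n * C (c * d) :=
    mul_left_cancel₀ hn0 <| by
      simp only [map_sub, map_mul, map_one] at h₁ ⊢; linear_combination h₁
  obtain ⟨w, hw, rfl⟩ :=
    exists_pos_eq_C_mul_of_dvd hnlc hz (hn1 ▸ hdz) (hdvd (by nlinarith [mul_pos hc hd]) h₂)
  have h₃ : (m * c * d - c - d) * w = c * d :=
    C_injective <| mul_left_cancel₀ hn0 <| by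
      simp only [map_sub, map_mul] at h₂ ⊢; linear_combination h₂
  nlinarith [mul_pos hc hd, mul_le_mul_of_nonneg_right hcd hw.le]

theorem false_of_natDegree_antitone (hm : 4 ≤ m) (hn₁ : 0 < n₁) (hcop : IsCoprime n₁ m)
    (hprime : Prime n₁) (h : ¬ ∃ k : ℤ, 0 < k ∧ n₁ = m * k - 1) (hn : Prime n)
    (hn1 : n.natDegree = 1) (hnlc : n.leadingCoeff = n₁) (hx : 0 < x.leadingCoeff)
    (hy : 0 < y.leadingCoeff) (hz : 0 < z.leadingCoeff) (hyx : y.natDegree ≤ x.natDegree)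
    (hzy : z.natDegree ≤ y.natDegree) (heq : C m * (x * y * z) = n * (x * y + x * z + y * z)) :
    False := by
  have hx0 : x ≠ 0 := leadingCoeff_ne_zero.mp hx.ne'
  have hy0 : y ≠ 0 := leadingCoeff_ne_zero.mp hy.ne'
  have hz0 : z ≠ 0 := leadingCoeff_ne_zero.mp hz.ne'
  have hlc : m * (x.leadingCoeff * y.leadingCoeff * z.leadingCoeff) =
      n₁ * (x * y + x * z + y * z).leadingCoeff := by
    simpa only [leadingCoeff_mul, leadingCoeff_C, hnlc] using congrArg leadingCoeff heq
  rcases hzy.lt_or_eq with hzy | hzy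
  · rw [leadingCoeff_mul_add_mul_add_mul_of_natDegree_lt hx0 hy0 hzy hyx] at hlc
    have hmn₁ : n₁ = m * z.leadingCoeff :=
      mul_right_cancel₀ (mul_pos hx hy).ne' (by linear_combination -hlc)
    obtain hm1 | hm1 := Int.isUnit_iff.mp (hcop.isUnit_of_dvd' ⟨_, hmn₁⟩ dvd_rfl) <;> omega
  rcases hyx.lt_or_eq with hyx | hyx
  · rw [leadingCoeff_mul_add_mul_add_mul_of_natDegree_eq hx0 hy hz hzy hyx] at hlc
    refine h (Int.exists_eq_mul_sub_one_of_mul_mul_eq_mul_add (by omega) hprime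
      (fun hdvd ↦ hprime.not_isUnit (hcop.isUnit_of_dvd' dvd_rfl hdvd)) hy hz ?_)
    exact mul_left_cancel₀ hx.ne' (by linear_combination hlc)
  · have hS : (x * y + x * z + y * z).natDegree ≤ x.natDegree + x.natDegree :=
      natDegree_add_le_of_degree_le
        (natDegree_add_le_of_degree_le (natDegree_mul_le_of_le le_rfl hyx.le)
          (natDegree_mul_le_of_le le_rfl (by omega)))
        (natDegree_mul_le_of_le hyx.le (by omega))
    have hdeg : 3 * x.natDegree ≤ 2 * x.natDegree + 1 :=
      calc 3 * x.natDegree = (C m * (x * y * z)).natDegree := by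
            rw [natDegree_C_mul (by omega), natDegree_mul (mul_ne_zero hx0 hy0) hz0,
              natDegree_mul hx0 hy0]
            omega
        _ = (n * (x * y + x * z + y * z)).natDegree := by rw [heq]
        _ ≤ 2 * x.natDegree + 1 := natDegree_mul_le.trans (by omega)
    exact false_of_natDegree_le_one hm hn hn1 (hnlc ▸ hn₁) hx hy hz (by omega) (by omega)
      (by omega) heq

theorem false_of_leadingCoeff_pos (hm : 4 ≤ m) (hn₁ : 0 < n₁) (hcop : IsCoprime n₁ m)
    (hprime : Prime n₁) (h : ¬ ∃ k : ℤ, 0 < k ∧ n₁ = m * k - 1) (hn : Prime n)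
    (hn1 : n.natDegree = 1) (hnlc : n.leadingCoeff = n₁) (hx : 0 < x.leadingCoeff)
    (hy : 0 < y.leadingCoeff) (hz : 0 < z.leadingCoeff)
    (heq : C m * (x * y * z) = n * (x * y + x * z + y * z)) : False := by
  wlog hyx : y.natDegree ≤ x.natDegree generalizing x y z
  · exact this hy hx hz (by linear_combination heq) (by omega)
  wlog hzy : z.natDegree ≤ y.natDegree generalizing x y z
  · rcases le_total z.natDegree x.natDegree with hzx | hxz
    · exact this hx hz hy (by linear_combination heq) hzx (by omega)
    · exact this hz hx hy (by linear_combination heq) hxz hyx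
  exact false_of_natDegree_antitone hm hn₁ hcop hprime h hn hn1 hnlc hx hy hz hyx hzy heq

end Equation

theorem corollary2_general (m n₀ n₁ : ℤ) (hm : 4 ≤ m) (hn₁ : 0 < n₁)
    (hcop : Int.gcd n₀ n₁ = 1) (hcop' : Int.gcd n₁ m = 1)
    (hprime : Prime n₁)
    (h : ¬ ∃ k : ℤ, 0 < k ∧ n₁ = m * k - 1) :
    ¬ ∃ x y z : Polynomial ℤ, IsIntPolySolution m n₀ n₁ x y z := by
  rintro ⟨x, y, z, hx, hy, hz, heq⟩
  have hlinear : C n₀ + C n₁ * X = C n₁ * X + C n₀ := add_comm _ _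
  exact false_of_leadingCoeff_pos hm hn₁ (Int.isCoprime_iff_gcd_eq_one.mpr hcop') hprime h
    (prime_C_add_C_mul_X hn₁.ne' (Int.isCoprime_iff_gcd_eq_one.mpr hcop))
    (hlinear ▸ natDegree_linear hn₁.ne') (hlinear ▸ leadingCoeff_linear hn₁.ne')
    (leadingCoeff_pos_of_forall_eval_natCast_pos hx)
    (leadingCoeff_pos_of_forall_eval_natCast_pos hy)
    (leadingCoeff_pos_of_forall_eval_natCast_pos hz) heq

/-- Corollary 2: if `n₁` is prime and not of the form `m·k − 1`,
then equation (2) has no integer polynomial solution. -/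
theorem corollary2 (m n₀ n₁ : ℤ) (hm : 4 ≤ m) (hn₀ : 0 < n₀) (hn₁ : 0 < n₁)
    (hcop : Int.gcd n₀ n₁ = 1) (hcop' : Int.gcd n₁ m = 1)
    (hprime : Prime n₁)
    (h : ¬ ∃ k : ℤ, 0 < k ∧ n₁ = m * k - 1) :
    ¬ ∃ x y z : Polynomial ℤ, IsIntPolySolution m n₀ n₁ x y z :=
  corollary2_general m n₀ n₁ hm hn₁ hcop hcop' hprime h
end

section
/- (Corollary 4.) Let m ≥ 4 be an integer and p a prime with gcd(p, m) = 1. Then equation (2) with modulus n₁ = p and residue n₀ = p + 1 (i.e. for n ≡ 1 (mod p)) has no integer polynomial solution: there are no polynomials x, y, z ∈ ℤ[λ] with positive values on the natural numbers satisfying m/((p+1) + p·t) = 1/x(t) + 1/y(t) + 1/z(t) for every natural number t. -/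
open Polynomial


lemma lin_ne' {a : ℤ} (b : ℤ) (ha : a ≠ 0) : (C a * X + C b : Polynomial ℤ) ≠ 0 := by
  intro h
  have h1 := natDegree_linear (b := b) ha
  rw [h] at h1
  simp at h1

set_option maxHeartbeats 400000 in
lemma case_bc (m p lx ly : ℤ) (hm : 4 ≤ m) (hppos : 0 < p)
    (hlx : 0 < lx) (hly : 0 < ly)
    (z : Polynomial ℤ) (hz0 : z ≠ 0) (hzpos : ∀ t : ℕ, 0 < z.eval (t:ℤ))
    (hzlc : 0 < z.leadingCoeff)
    (heq : C m * ((C lx * (X+1)) * ((C ly * (X+1))) * z)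
        = (C p * X + C (p+1)) * ((C lx * (X+1)) * (C ly * (X+1))
            + (C lx * (X+1)) * z + (C ly * (X+1)) * z)) : False := by
  have hX1 : (X + 1 : Polynomial ℤ) ≠ 0 := by
    intro h
    have := congrArg (Polynomial.eval (0:ℤ)) h
    simp at this
  have hp0 : p ≠ 0 := hppos.ne'
  have hN0 : (C p * X + C (p+1) : Polynomial ℤ) ≠ 0 := lin_ne' _ hp0
  have hNdeg : (C p * X + C (p+1) : Polynomial ℤ).natDegree = 1 := natDegree_linear hp0
  have hNlc : (C p * X + C (p+1) : Polynomial ℤ).leadingCoeff = p := leadingCoeff_linear hp0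
  have E1 : C m * C lx * C ly * (X+1) * z
      = (C p * X + C (p+1)) * (C lx * C ly * (X+1) + (C lx + C ly) * z) :=
    mul_left_cancel₀ hX1 (by linear_combination heq)
  have hZ : z.eval (-1) = 0 := by
    have h := congrArg (Polynomial.eval (-1:ℤ)) E1
    simp at h
    rcases h with h | h
    · nlinarith
    · exact h
  obtain ⟨z₁, hz1⟩ : (X + 1 : Polynomial ℤ) ∣ z := by
    have := (dvd_iff_isRoot (p := z) (a := (-1:ℤ))).mpr hZ
    simpa using this
  have hz₁0 : z₁ ≠ 0 := by rintro rfl; simp at hz1; exact hz0 hz1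
  have E2 : C m * C lx * C ly * (X+1) * z₁
      = (C p * X + C (p+1)) * (C lx * C ly + (C lx + C ly) * z₁) := by
    apply mul_left_cancel₀ hX1
    rw [hz1] at E1
    linear_combination E1
  have hz₁lc : z₁.leadingCoeff = z.leadingCoeff := by
    rw [hz1, leadingCoeff_mul]
    have h2 : (X + 1 : Polynomial ℤ).leadingCoeff = 1 := by
      simpa using (monic_X_add_C (1:ℤ)).leadingCoeff
    rw [h2, one_mul]
  rcases Nat.eq_zero_or_pos z₁.natDegree with hd | hd
  · have hc := eq_C_of_natDegree_eq_zero hd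
    have hcpos : 0 < z₁.coeff 0 := by
      have := hzpos 0
      rw [hz1, hc] at this
      simpa using this
    have h := congrArg (Polynomial.eval (-1:ℤ)) E2
    rw [hc] at h
    simp at h
    nlinarith
  · have E3 : z₁ * (C m * C lx * C ly * (X+1) - (C p * X + C (p+1)) * (C lx + C ly))
        = (C p * X + C (p+1)) * C (lx * ly) := by
      simp only [C_mul]
      linear_combination E2
    have hW : C m * C lx * C ly * (X+1) - (C p * X + C (p+1)) * (C lx + C ly)
        = C (m*lx*ly - p*(lx+ly)) * X + C (m*lx*ly - (p+1)*(lx+ly)) := by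
      simp only [C_sub, C_mul, C_add]
      ring
    by_cases hK : m*lx*ly - p*(lx+ly) = 0
    · have hW' : C m * C lx * C ly * (X+1) - (C p * X + C (p+1)) * (C lx + C ly)
          = C (-(lx+ly)) := by
        rw [hW, hK]
        have h3 : m*lx*ly - (p+1)*(lx+ly) = -(lx+ly) := by linarith
        rw [h3]
        simp
      rw [hW'] at E3
      have hlc := congrArg Polynomial.leadingCoeff E3
      simp only [leadingCoeff_mul, leadingCoeff_C, hNlc] at hlc
      have hzl : 0 < z₁.leadingCoeff := hz₁lc ▸ hzlc
      nlinarith [mul_pos hzl (show (0:ℤ) < lx + ly by linarith),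
        mul_pos hppos (mul_pos hlx hly)]
    · have hWne : (C m * C lx * C ly * (X+1) - (C p * X + C (p+1)) * (C lx + C ly)) ≠ 0 := by
        rw [hW]; exact lin_ne' _ hK
      have hdW : (C m * C lx * C ly * (X+1) - (C p * X + C (p+1)) * (C lx + C ly)).natDegree
          = 1 := by rw [hW]; exact natDegree_linear hK
      have hdeg := congrArg Polynomial.natDegree E3
      rw [natDegree_mul hz₁0 hWne, hdW,
        natDegree_mul hN0 (show (C (lx*ly) : Polynomial ℤ) ≠ 0 by rw [Ne, C_eq_zero]; exact mul_ne_zero hlx.ne' hly.ne'),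
        hNdeg, natDegree_C] at hdeg
      omega

set_option maxHeartbeats 1000000 in
-- case bd : x and z vanish at -1, y does not ; x, y linear
lemma case_bd (m p lx ly y₀ : ℤ) (hm : 4 ≤ m) (hppos : 0 < p)
    (hlx : 0 < lx) (hly : 0 < ly) (hY : y₀ - ly ≠ 0)
    (z : Polynomial ℤ) (hz0 : z ≠ 0) (hzpos : ∀ t : ℕ, 0 < z.eval (t:ℤ))
    (hzlc : 0 < z.leadingCoeff) (hzZ : z.eval (-1) = 0)
    (heq : C m * ((C lx * (X+1)) * (C ly * X + C y₀) * z)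
        = (C p * X + C (p+1)) * ((C lx * (X+1)) * (C ly * X + C y₀)
            + (C lx * (X+1)) * z + (C ly * X + C y₀) * z)) : False := by
  have hX1 : (X + 1 : Polynomial ℤ) ≠ 0 := by
    intro h
    have := congrArg (Polynomial.eval (0:ℤ)) h
    simp at this
  have hp0 : p ≠ 0 := hppos.ne'
  have hN0 : (C p * X + C (p+1) : Polynomial ℤ) ≠ 0 := lin_ne' _ hp0
  have hNdeg : (C p * X + C (p+1) : Polynomial ℤ).natDegree = 1 := natDegree_linear hp0
  have hNlc : (C p * X + C (p+1) : Polynomial ℤ).leadingCoeff = p := leadingCoeff_linear hp0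
  have hy0 : (C ly * X + C y₀ : Polynomial ℤ) ≠ 0 := lin_ne' _ hly.ne'
  have hydeg : (C ly * X + C y₀ : Polynomial ℤ).natDegree = 1 := natDegree_linear hly.ne'
  have hylc : (C ly * X + C y₀ : Polynomial ℤ).leadingCoeff = ly := leadingCoeff_linear hly.ne'
  obtain ⟨z₁, hz1⟩ : (X + 1 : Polynomial ℤ) ∣ z := by
    have := (dvd_iff_isRoot (p := z) (a := (-1:ℤ))).mpr hzZ
    simpa using this
  have hz₁0 : z₁ ≠ 0 := by rintro rfl; simp at hz1; exact hz0 hz1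
  have hz₁lc : z₁.leadingCoeff = z.leadingCoeff := by
    rw [hz1, leadingCoeff_mul]
    have h2 : (X + 1 : Polynomial ℤ).leadingCoeff = 1 := by
      simpa using (monic_X_add_C (1:ℤ)).leadingCoeff
    rw [h2, one_mul]
  rw [hz1] at heq
  -- cancel one (X+1)
  have E2 : (X+1) * (C m * C lx * (C ly * X + C y₀) * z₁)
      = (C p * X + C (p+1)) * (C lx * (C ly * X + C y₀)
          + C lx * (X+1) * z₁ + (C ly * X + C y₀) * z₁) :=
    mul_left_cancel₀ hX1 (by linear_combination heq)
  -- E3 : z₁ * Q = N * (C lx * y)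
  have E3 : z₁ * (C m * C lx * (X+1) * (C ly * X + C y₀)
        - (C p * X + C (p+1)) * (C lx * (X+1) + (C ly * X + C y₀)))
      = (C p * X + C (p+1)) * (C lx * (C ly * X + C y₀)) := by
    linear_combination E2
  -- A0 : z₁(-1) = -lx
  have A0 : z₁.eval (-1) = -lx := by
    have h := congrArg (Polynomial.eval (-1:ℤ)) E3
    simp at h
    have h2 : (y₀ - ly) * (z₁.eval (-1) + lx) = 0 := by linear_combination -h
    rcases mul_eq_zero.mp h2 with h3 | h3
    · exact absurd h3 hY
    · linarith
  -- A1 : derivative identity evaluated at -1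
  have A1 : -((Polynomial.derivative z₁).eval (-1) * (y₀ - ly)) = lx^2 * (m * (y₀ - ly) - 1) := by
    have h := congrArg (fun q => Polynomial.eval (-1:ℤ) (Polynomial.derivative q)) E3
    simp only [derivative_mul, derivative_add, derivative_sub, derivative_C, derivative_X,
      derivative_one, eval_mul, eval_add, eval_sub, eval_C, eval_X, eval_one, eval_zero,
      zero_mul, mul_zero, zero_add, add_zero, mul_one, one_mul] at h
    rw [A0] at h
    linear_combination h
  rcases lt_trichotomy z₁.natDegree 1 with hd | hd | hd
  · -- z₁ constant: z₁(0) = z₁(-1) = -lx < 0 but z(0) > 0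
    have hc := eq_C_of_natDegree_eq_zero (Nat.lt_one_iff.mp hd)
    have hcpos : 0 < z₁.coeff 0 := by
      have := hzpos 0
      rw [hz1, hc] at this
      simpa using this
    rw [hc] at A0
    simp at A0
    linarith
  · -- z₁ linear : derivative z₁ = C (lc z₁), positive
    have hc := eq_X_add_C_of_natDegree_le_one hd.le
    have hlcz : z₁.coeff 1 = z₁.leadingCoeff := by
      rw [Polynomial.leadingCoeff, hd]
    have hd1 : (Polynomial.derivative z₁).eval (-1) = z₁.leadingCoeff := by
      conv_lhs => rw [hc]
      simp [hlcz]
    rw [hd1] at A1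
    have hzl : 0 < z₁.leadingCoeff := hz₁lc ▸ hzlc
    rcases lt_or_gt_of_ne hY with h | h
    · have h1 : (0:ℤ) < ly - y₀ := by linarith
      have h2 : (0:ℤ) < -(m * (y₀ - ly) - 1) := by nlinarith
      nlinarith [mul_pos hzl h1, mul_pos (mul_pos hlx hlx) h2]
    · have h2 : (0:ℤ) < m * (y₀ - ly) - 1 := by nlinarith
      nlinarith [mul_pos hzl h, mul_pos (mul_pos hlx hlx) h2]
  · -- deg z₁ ≥ 2 : Q must be constant
    have hQne : (C m * C lx * (X+1) * (C ly * X + C y₀)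
        - (C p * X + C (p+1)) * (C lx * (X+1) + (C ly * X + C y₀))) ≠ 0 := by
      intro h
      rw [h, mul_zero] at E3
      exact (mul_ne_zero hN0 (mul_ne_zero (fun hh => hlx.ne' (by simpa using hh)) hy0)) E3.symm
    have hRdeg : ((C p * X + C (p+1)) * (C lx * (C ly * X + C y₀))).natDegree = 2 := by
      rw [natDegree_mul hN0 (mul_ne_zero (fun hh => hlx.ne' (by simpa using hh)) hy0), hNdeg,
        natDegree_mul (fun hh => hlx.ne' (by simpa using hh) : (C lx : Polynomial ℤ) ≠ 0) hy0,
        natDegree_C, hydeg]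
    have hdeg := congrArg Polynomial.natDegree E3
    rw [natDegree_mul hz₁0 hQne, hRdeg] at hdeg
    have hQdeg : (C m * C lx * (X+1) * (C ly * X + C y₀)
        - (C p * X + C (p+1)) * (C lx * (X+1) + (C ly * X + C y₀))).natDegree = 0 := by omega
    -- Q is the constant C (-(y₀ - ly))
    have hQC := eq_C_of_natDegree_eq_zero hQdeg
    have hQev : (C m * C lx * (X+1) * (C ly * X + C y₀)
        - (C p * X + C (p+1)) * (C lx * (X+1) + (C ly * X + C y₀))).eval (-1) = -(y₀ - ly) := by
      simp
      ring
    have hQcoeff : (C m * C lx * (X+1) * (C ly * X + C y₀)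
        - (C p * X + C (p+1)) * (C lx * (X+1) + (C ly * X + C y₀))).coeff 0 = -(y₀ - ly) := by
      have h := congrArg (Polynomial.eval (-1:ℤ)) hQC
      rw [hQev, eval_C] at h
      exact h.symm
    rw [hQcoeff] at hQC
    -- derivative of Q is zero
    have hQ'0 : Polynomial.derivative (C m * C lx * (X+1) * (C ly * X + C y₀)
        - (C p * X + C (p+1)) * (C lx * (X+1) + (C ly * X + C y₀))) = 0 := by
      rw [hQC]; simp
    -- first derivative at -1 gives q1 = 0
    have hq1 : m * lx * (y₀ - ly) - p * (y₀ - ly) - lx - ly = 0 := by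
      have h := congrArg (Polynomial.eval (-1:ℤ)) hQ'0
      simp only [derivative_mul, derivative_add, derivative_sub, derivative_C, derivative_X,
        derivative_one, eval_mul, eval_add, eval_sub, eval_C, eval_X, eval_one, eval_zero,
        zero_mul, mul_zero, zero_add, add_zero, mul_one, one_mul] at h
      linear_combination h
    -- second derivative at -1 gives K2 = 0
    have hK2 : m * lx * ly - p * (lx + ly) = 0 := by
      have h := congrArg (fun q => Polynomial.eval (-1:ℤ) (Polynomial.derivative q)) hQ'0
      simp only [derivative_mul, derivative_add, derivative_sub, derivative_C, derivative_X,
        derivative_one, derivative_zero, eval_mul, eval_add, eval_sub, eval_C, eval_X, eval_one,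
        eval_zero, zero_mul, mul_zero, zero_add, add_zero, mul_one, one_mul] at h
      linarith
    -- leading coefficient of E3 with constant Q
    rw [hQC] at E3
    have hlc := congrArg Polynomial.leadingCoeff E3
    simp only [leadingCoeff_mul, leadingCoeff_C, hNlc, hylc] at hlc
    have hzl : 0 < z₁.leadingCoeff := hz₁lc ▸ hzlc
    -- from hK2 : m*lx > p ; from hq1 : (y₀-ly)*(m*lx-p) = lx+ly > 0 so y₀-ly > 0
    -- from hlc : lcz₁ * (-(y₀-ly)) = p * (lx*ly) > 0 so y₀ - ly < 0
    have hmlx : p < m * lx := by nlinarith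
    have hYpos : 0 < y₀ - ly := by nlinarith
    nlinarith [mul_pos hppos (mul_pos hlx hly), mul_pos hzl hYpos]


lemma eventually_neg (f : Polynomial ℤ) (hf : f.leadingCoeff < 0) :
    ∃ t₀ : ℕ, ∀ t : ℕ, t₀ ≤ t → f.eval (t : ℤ) < 0 := by
  suffices H : ∀ n : ℕ, ∀ f : Polynomial ℤ, f.natDegree = n → f.leadingCoeff < 0 →
      ∃ t₀ : ℕ, ∀ t : ℕ, t₀ ≤ t → f.eval (t : ℤ) < 0 from H f.natDegree f rfl hf
  intro n
  induction n using Nat.strong_induction_on with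
  | _ n IH =>
    intro f hn hf
    rcases Nat.eq_zero_or_pos n with h0 | h0
    · subst h0
      refine ⟨0, fun t _ => ?_⟩
      have hc := eq_C_of_natDegree_eq_zero hn
      rw [hc, eval_C]
      have hl : f.leadingCoeff = f.coeff 0 := by
        rw [Polynomial.leadingCoeff, hn]
      linarith [hl ▸ hf]
    · set g := f.divX with hg
      have hdeg : g.natDegree = n - 1 := by
        rw [hg, natDegree_divX_eq_natDegree_tsub_one, hn]
      have hglc : g.leadingCoeff = f.leadingCoeff := by
        rw [Polynomial.leadingCoeff, Polynomial.leadingCoeff, hdeg, hg, coeff_divX, hn]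
        congr 1
        omega
      obtain ⟨t₀, ht⟩ := IH (n-1) (by omega) g hdeg (hglc ▸ hf)
      refine ⟨max t₀ ((f.coeff 0).toNat + 1), fun t htt => ?_⟩
      have h1 : g.eval (t:ℤ) ≤ -1 := by
        have := ht t (le_trans (le_max_left _ _) htt)
        omega
      have h2 : (f.coeff 0 : ℤ) < (t:ℤ) := by
        have h5 : (f.coeff 0).toNat + 1 ≤ t := le_trans (le_max_right _ _) htt
        have h3 : (f.coeff 0) ≤ ((f.coeff 0).toNat : ℤ) := Int.self_le_toNat _
        have h4 : (((f.coeff 0).toNat + 1 : ℕ) : ℤ) ≤ (t:ℤ) := by exact_mod_cast h5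
        push_cast at h4
        omega
      have hfeq : f.eval (t:ℤ) = g.eval (t:ℤ) * (t:ℤ) + f.coeff 0 := by
        conv_lhs => rw [← divX_mul_X_add f]
        simp [hg]
      rw [hfeq]
      have ht0 : (0:ℤ) ≤ (t:ℤ) := Int.natCast_nonneg t
      nlinarith

lemma lc_pos (f : Polynomial ℤ) (hf : f ≠ 0) (h : ∀ t : ℕ, 0 < f.eval (t : ℤ)) :
    0 < f.leadingCoeff := by
  rcases lt_trichotomy f.leadingCoeff 0 with hl | hl | hl
  · obtain ⟨t₀, ht⟩ := eventually_neg f hl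
    exact absurd (h t₀) (ht t₀ le_rfl).not_gt
  · exact absurd (leadingCoeff_eq_zero.mp hl) hf
  · exact hl

set_option maxHeartbeats 1000000 in
lemma case_deg11 (m p : ℤ) (hm : 4 ≤ m) (hppos : 0 < p)
    (x y z : Polynomial ℤ)
    (hxpos : ∀ t : ℕ, 0 < x.eval (t:ℤ)) (hypos : ∀ t : ℕ, 0 < y.eval (t:ℤ))
    (hzpos : ∀ t : ℕ, 0 < z.eval (t:ℤ))
    (hz0 : z ≠ 0) (hzlc : 0 < z.leadingCoeff)
    (hdx : x.natDegree = 1) (hdy : y.natDegree = 1)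
    (heq : C m * (x * y * z) = (C p * X + C (p+1)) * (x*y + x*z + y*z)) : False := by
  have hx := eq_X_add_C_of_natDegree_le_one hdx.le
  have hy := eq_X_add_C_of_natDegree_le_one hdy.le
  set lx := x.coeff 1 with hlxd
  set x₀ := x.coeff 0 with hx0d
  set ly := y.coeff 1 with hlyd
  set y₀ := y.coeff 0 with hy0d
  have hlx : 0 < lx := by
    have h := lc_pos x (fun h => by simpa [h] using hxpos 0) hxpos
    rwa [Polynomial.leadingCoeff, hdx] at h
  have hly : 0 < ly := by
    have h := lc_pos y (fun h => by simpa [h] using hypos 0) hypos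
    rwa [Polynomial.leadingCoeff, hdy] at h
  have hx0 : 0 < x₀ := by
    have := hxpos 0
    rw [hx] at this
    simpa using this
  have hy0 : 0 < y₀ := by
    have := hypos 0
    rw [hy] at this
    simpa using this
  rw [hx, hy] at heq
  have e := congrArg (Polynomial.eval (-1:ℤ)) heq
  simp only [eval_mul, eval_add, eval_C, eval_X, eval_one] at e
  by_cases hX0 : x₀ - lx = 0
  · have hCx : (C x₀ : Polynomial ℤ) = C lx := by rw [show x₀ = lx by linarith]
    rw [hCx] at heq
    by_cases hY0 : y₀ - ly = 0
    · have hCy : (C y₀ : Polynomial ℤ) = C ly := by rw [show y₀ = ly by linarith]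
      rw [hCy] at heq
      exact case_bc m p lx ly hm hppos hlx hly z hz0 hzpos hzlc (by linear_combination heq)
    · by_cases hZ0 : z.eval (-1) = 0
      · exact case_bd m p lx ly y₀ hm hppos hlx hly hY0 z hz0 hzpos hzlc hZ0
          (by linear_combination heq)
      · -- only x vanishes : contradiction
        have h5 : (y₀ - ly) * z.eval (-1) = 0 := by
          rw [show x₀ = lx by linarith] at e
          linear_combination -e
        rcases mul_eq_zero.mp h5 with h6 | h6
        · exact hY0 h6
        · exact hZ0 h6
  · by_cases hY0 : y₀ - ly = 0
    · have hCy : (C y₀ : Polynomial ℤ) = C ly := by rw [show y₀ = ly by linarith]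
      rw [hCy] at heq
      by_cases hZ0 : z.eval (-1) = 0
      · exact case_bd m p ly lx x₀ hm hppos hly hlx hX0 z hz0 hzpos hzlc hZ0
          (by linear_combination heq)
      · have h5 : (x₀ - lx) * z.eval (-1) = 0 := by
          rw [show y₀ = ly by linarith] at e
          linear_combination -e
        rcases mul_eq_zero.mp h5 with h6 | h6
        · exact hX0 h6
        · exact hZ0 h6
    · by_cases hZ0 : z.eval (-1) = 0
      · have h5 : (x₀ - lx) * (y₀ - ly) = 0 := by
          rw [hZ0] at e
          linear_combination -e
        rcases mul_eq_zero.mp h5 with h6 | h6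
        · exact hX0 h6
        · exact hY0 h6
      · -- nothing vanishes : size contradiction
        have e2 : m * ((x₀ - lx) * (y₀ - ly) * z.eval (-1))
            = (x₀-lx)*(y₀-ly) + (x₀-lx)*z.eval (-1) + (y₀-ly)*z.eval (-1) := by
          linear_combination e
        set A := x₀ - lx
        set B := y₀ - ly
        set Cz := z.eval (-1)
        have hA : 1 ≤ |A| := Int.one_le_abs hX0
        have hB : 1 ≤ |B| := Int.one_le_abs hY0
        have hC : 1 ≤ |Cz| := Int.one_le_abs hZ0
        have habs := congrArg (fun t : ℤ => |t|) e2
        simp only [abs_mul] at habs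
        rw [abs_of_nonneg (show (0:ℤ) ≤ m by linarith)] at habs
        have h3 : |A * B + A * Cz + B * Cz| ≤ |A| * |B| + |A| * |Cz| + |B| * |Cz| := by
          refine (abs_add_three _ _ _).trans ?_
          rw [abs_mul, abs_mul, abs_mul]
        have q1 : |A| * |B| ≤ |A| * |B| * |Cz| := by
          nlinarith [mul_nonneg (mul_nonneg (abs_nonneg A) (abs_nonneg B))
            (show (0:ℤ) ≤ |Cz| - 1 by linarith)]
        have q2 : |A| * |Cz| ≤ |A| * |B| * |Cz| := by
          nlinarith [mul_nonneg (mul_nonneg (abs_nonneg A) (abs_nonneg Cz))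
            (show (0:ℤ) ≤ |B| - 1 by linarith)]
        have q3 : |B| * |Cz| ≤ |A| * |B| * |Cz| := by
          nlinarith [mul_nonneg (mul_nonneg (abs_nonneg B) (abs_nonneg Cz))
            (show (0:ℤ) ≤ |A| - 1 by linarith)]
        have hAB : 1 ≤ |A| * |B| := by
          nlinarith [mul_nonneg (sub_nonneg.2 hA) (sub_nonneg.2 hB)]
        have q0 : 1 ≤ |A| * |B| * |Cz| := by
          nlinarith [mul_nonneg (sub_nonneg.2 hAB) (sub_nonneg.2 hC)]
        have hms : (0:ℤ) ≤ m - 4 := by linarith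
        have hPs : (0:ℤ) ≤ |A| * |B| * |Cz| := by linarith
        have q4 : (0:ℤ) ≤ (m - 4) * (|A| * |B| * |Cz|) := mul_nonneg hms hPs
        nlinarith [q4]

set_option maxHeartbeats 1000000 in
lemma core (m p : ℤ) (hm : 4 ≤ m) (hp : Prime p) (hppos : 0 < p) (hcop : Int.gcd p m = 1)
    (x y z : Polynomial ℤ)
    (hxpos : ∀ t : ℕ, 0 < x.eval (t:ℤ)) (hypos : ∀ t : ℕ, 0 < y.eval (t:ℤ))
    (hzpos : ∀ t : ℕ, 0 < z.eval (t:ℤ))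
    (heq : C m * (x * y * z) = (C p * X + C (p+1)) * (x*y + x*z + y*z))
    (h12 : x.natDegree ≤ y.natDegree) (h23 : y.natDegree ≤ z.natDegree) : False := by
  have hp0 : p ≠ 0 := hppos.ne'
  have hx0 : x ≠ 0 := fun h => by simpa [h] using hxpos 0
  have hy0 : y ≠ 0 := fun h => by simpa [h] using hypos 0
  have hz0 : z ≠ 0 := fun h => by simpa [h] using hzpos 0
  have hlx := lc_pos x hx0 hxpos
  have hly := lc_pos y hy0 hypos
  have hlz := lc_pos z hz0 hzpos
  have hN0 : (C p * X + C (p+1) : Polynomial ℤ) ≠ 0 := lin_ne' _ hp0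
  have hNdeg : (C p * X + C (p+1) : Polynomial ℤ).natDegree = 1 := natDegree_linear hp0
  have hNlc : (C p * X + C (p+1) : Polynomial ℤ).leadingCoeff = p := leadingCoeff_linear hp0
  have hyz : (y*z).coeff (y.natDegree + z.natDegree) = y.leadingCoeff * z.leadingCoeff :=
    coeff_mul_degree_add_degree y z
  have a1 : (x*y).natDegree = x.natDegree + y.natDegree := natDegree_mul hx0 hy0
  have a2 : (x*z).natDegree = x.natDegree + z.natDegree := natDegree_mul hx0 hz0
  have a3 : (y*z).natDegree = y.natDegree + z.natDegree := natDegree_mul hy0 hz0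
  have hxyc : 0 ≤ (x*y).coeff (y.natDegree + z.natDegree) := by
    rcases lt_or_eq_of_le (h12.trans h23) with h | h
    · rw [coeff_eq_zero_of_natDegree_lt (by omega : (x*y).natDegree < y.natDegree + z.natDegree)]
    · rw [show y.natDegree + z.natDegree = x.natDegree + y.natDegree by omega,
        coeff_mul_degree_add_degree]
      exact le_of_lt (mul_pos hlx hly)
  have hxzc : 0 ≤ (x*z).coeff (y.natDegree + z.natDegree) := by
    rcases lt_or_eq_of_le h12 with h | h
    · rw [coeff_eq_zero_of_natDegree_lt (by omega : (x*z).natDegree < y.natDegree + z.natDegree)]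
    · rw [show y.natDegree + z.natDegree = x.natDegree + z.natDegree by omega,
        coeff_mul_degree_add_degree]
      exact le_of_lt (mul_pos hlx hlz)
  have hScoeff : 0 < (x*y + x*z + y*z).coeff (y.natDegree + z.natDegree) := by
    rw [coeff_add, coeff_add, hyz]
    nlinarith [mul_pos hly hlz]
  have hS0 : (x*y + x*z + y*z) ≠ 0 := fun h => by rw [h] at hScoeff; simp at hScoeff
  have hSdeg : (x*y + x*z + y*z).natDegree = y.natDegree + z.natDegree := by
    apply le_antisymm
    · refine le_trans (natDegree_add_le _ _) (max_le (le_trans (natDegree_add_le _ _)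
        (max_le ?_ ?_)) ?_)
      · omega
      · omega
      · omega
    · exact le_natDegree_of_ne_zero (ne_of_gt hScoeff)
  have hdeq := congrArg Polynomial.natDegree heq
  rw [natDegree_mul (C_ne_zero.mpr (by linarith : m ≠ 0))
      (mul_ne_zero (mul_ne_zero hx0 hy0) hz0),
    natDegree_C, natDegree_mul (mul_ne_zero hx0 hy0) hz0, natDegree_mul hx0 hy0,
    natDegree_mul hN0 hS0, hNdeg, hSdeg] at hdeq
  have hd1 : x.natDegree = 1 := by omega
  by_cases hd2 : y.natDegree = 1
  · exact case_deg11 m p hm hppos x y z hxpos hypos hzpos hz0 hlz hd1 hd2 heq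
  · have hd2' : 1 < y.natDegree := by omega
    have hxyc0 : (x*y).coeff (y.natDegree + z.natDegree) = 0 :=
      coeff_eq_zero_of_natDegree_lt (by omega)
    have hxzc0 : (x*z).coeff (y.natDegree + z.natDegree) = 0 :=
      coeff_eq_zero_of_natDegree_lt (by omega)
    have hSlc : (x*y + x*z + y*z).leadingCoeff = y.leadingCoeff * z.leadingCoeff := by
      rw [Polynomial.leadingCoeff, hSdeg, coeff_add, coeff_add, hxyc0, hxzc0, hyz, zero_add,
        zero_add]
    have hlceq := congrArg Polynomial.leadingCoeff heq
    simp only [leadingCoeff_mul, leadingCoeff_C] at hlceq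
    rw [hNlc, hSlc] at hlceq
    have hml : m * x.leadingCoeff = p :=
      mul_right_cancel₀ (mul_ne_zero hly.ne' hlz.ne') (by linear_combination hlceq)
    rcases hp.irreducible.isUnit_or_isUnit hml.symm with hu | hu
    · rcases Int.isUnit_iff.mp hu with h | h <;> omega
    · rcases Int.isUnit_iff.mp hu with h | h
      · have hpm : p = m := by rw [← hml, h, mul_one]
        rw [hpm, Int.gcd_self] at hcop
        rcases Int.natAbs_eq_iff.mp hcop with h2 | h2 <;> simp at h2 <;> omega
      · linarith


/-- Corollary 4: for a prime `p` coprime to `m ≥ 4`, equation (2) with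
`n ≡ 1 (mod p)`, i.e. `n₀ = p + 1` and `n₁ = p`, has no integer polynomial
solution. -/
theorem corollary4 (m p : ℤ) (hm : 4 ≤ m) (hp : Prime p) (hppos : 0 < p)
    (hcop : Int.gcd p m = 1) :
    ¬ ∃ x y z : Polynomial ℤ, IsIntPolySolution m (p + 1) p x y z := by
  rintro ⟨x, y, z, hxpos, hypos, hzpos, heq⟩
  have heq' : C m * (x*y*z) = (C p * X + C (p+1)) * (x*y + x*z + y*z) := by
    linear_combination heq
  rcases le_total x.natDegree y.natDegree with h1 | h1
  · rcases le_total y.natDegree z.natDegree with h2 | h2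
    · exact core m p hm hp hppos hcop x y z hxpos hypos hzpos heq' h1 h2
    · rcases le_total x.natDegree z.natDegree with h3 | h3
      · exact core m p hm hp hppos hcop x z y hxpos hzpos hypos
          (by linear_combination heq') h3 h2
      · exact core m p hm hp hppos hcop z x y hzpos hxpos hypos
          (by linear_combination heq') h3 h1
  · rcases le_total x.natDegree z.natDegree with h3 | h3
    · exact core m p hm hp hppos hcop y x z hypos hxpos hzpos
        (by linear_combination heq') h1 h3
    · rcases le_total y.natDegree z.natDegree with h2 | h2
      · exact core m p hm hp hppos hcop y z x hypos hzpos hxpos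
          (by linear_combination heq') h2 h3
      · exact core m p hm hp hppos hcop z y x hzpos hypos hxpos
          (by linear_combination heq') h2 h1
end

section
/- (Lemma 1.) Let m, n₀, n₁ be positive integers and let x, y, z ∈ ℚ[λ] be polynomials with x(t) > 0, y(t) > 0, z(t) > 0 for every natural number t, satisfying the polynomial identity m·x·y·z = (n₀ + n₁·λ)·(x·y + x·z + y·z). Then at least one of x, y, z has degree exactly 1; more precisely, the minimum of the degrees of x, y, z equals 1. -/
open Polynomial

/-- `x, y, z ∈ ℚ[λ]` form a rational polynomial solution of equation (2). -/
def IsRatPolySolution (m n₀ n₁ : ℤ) (x y z : Polynomial ℚ) : Prop :=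
  (∀ t : ℕ, 0 < x.eval (t : ℚ)) ∧ (∀ t : ℕ, 0 < y.eval (t : ℚ)) ∧
  (∀ t : ℕ, 0 < z.eval (t : ℚ)) ∧
  C (m : ℚ) * (x * y * z) =
    (C (n₀ : ℚ) + C (n₁ : ℚ) * X) * (x * y + x * z + y * z)

open Filter in
/-- A polynomial positive on all naturals has positive leading coefficient. -/
lemma pos_lead_of_pos {p : Polynomial ℚ} (h : ∀ t : ℕ, 0 < p.eval (t:ℚ)) :
    0 < p.leadingCoeff := by
  have hp0 : p ≠ 0 := by
    intro h0; have := h 0; simp [h0] at this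
  by_cases hd : p.natDegree = 0
  · obtain ⟨c, rfl⟩ := natDegree_eq_zero.mp hd
    have := h 0; simpa using this
  · by_contra hle
    push_neg at hle
    have hdeg : 0 < p.degree := natDegree_pos_iff_degree_pos.mp (by omega)
    have htend : Tendsto (fun x : ℚ => p.eval x) atTop atBot :=
      p.tendsto_atBot_of_leadingCoeff_nonpos hdeg hle
    have : Tendsto (fun t : ℕ => p.eval (t:ℚ)) atTop atBot :=
      htend.comp tendsto_natCast_atTop_atTop
    obtain ⟨t, ht⟩ := (this.eventually (eventually_lt_atBot (0:ℚ))).exists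
    exact absurd (h t) (not_lt.mpr ht.le)

/-- Sums of polynomials with positive leading coefficients have no cancellation. -/
lemma pos_lead_add {p q : Polynomial ℚ} (hp : 0 < p.leadingCoeff) (hq : 0 < q.leadingCoeff) :
    0 < (p+q).leadingCoeff ∧ (p+q).natDegree = max p.natDegree q.natDegree := by
  set M := max p.natDegree q.natDegree with hM
  have key : ∀ r : Polynomial ℚ, 0 < r.leadingCoeff → r.natDegree ≤ M →
      0 ≤ r.coeff M ∧ (r.natDegree = M → 0 < r.coeff M) := by
    intro r hr hle
    rcases eq_or_lt_of_le hle with h | h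
    · have hpos : 0 < r.coeff M := by rw [← h, coeff_natDegree]; exact hr
      exact ⟨hpos.le, fun _ => hpos⟩
    · rw [coeff_eq_zero_of_natDegree_lt h]; exact ⟨le_refl 0, fun he => absurd he (by omega)⟩
  have hple : p.natDegree ≤ M := le_max_left _ _
  have hqle : q.natDegree ≤ M := le_max_right _ _
  have hcoeff : 0 < (p+q).coeff M := by
    rw [coeff_add]
    rcases max_cases p.natDegree q.natDegree with ⟨he, _⟩ | ⟨he, _⟩
    · have := (key p hp hple).2 he.symm
      have := (key q hq hqle).1
      linarith
    · have := (key q hq hqle).2 he.symm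
      have := (key p hp hple).1
      linarith
  have hdeg : (p+q).natDegree = M := by
    refine le_antisymm ?_ (le_natDegree_of_ne_zero (ne_of_gt hcoeff))
    exact natDegree_add_le p q
  refine ⟨?_, hdeg⟩
  rw [leadingCoeff, hdeg]; exact hcoeff

/-- Lemma 1: in a rational polynomial solution of (2), the minimum of the
degrees of `x, y, z` equals 1. -/
theorem lemma1 (m n₀ n₁ : ℤ) (hm : 0 < m) (hn₀ : 0 < n₀) (hn₁ : 0 < n₁)
    (x y z : Polynomial ℚ) (hsol : IsRatPolySolution m n₀ n₁ x y z) :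
    min (min x.natDegree y.natDegree) z.natDegree = 1 := by
  obtain ⟨hx, hy, hz, heq⟩ := hsol
  have lx := pos_lead_of_pos hx
  have ly := pos_lead_of_pos hy
  have lz := pos_lead_of_pos hz
  have hx0 : x ≠ 0 := leadingCoeff_ne_zero.mp (ne_of_gt lx)
  have hy0 : y ≠ 0 := leadingCoeff_ne_zero.mp (ne_of_gt ly)
  have hz0 : z ≠ 0 := leadingCoeff_ne_zero.mp (ne_of_gt lz)
  have lxy : 0 < (x*y).leadingCoeff := by rw [leadingCoeff_mul]; positivity
  have lxz : 0 < (x*z).leadingCoeff := by rw [leadingCoeff_mul]; positivity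
  have lyz : 0 < (y*z).leadingCoeff := by rw [leadingCoeff_mul]; positivity
  have dxy : (x*y).natDegree = x.natDegree + y.natDegree := natDegree_mul hx0 hy0
  have dxz : (x*z).natDegree = x.natDegree + z.natDegree := natDegree_mul hx0 hz0
  have dyz : (y*z).natDegree = y.natDegree + z.natDegree := natDegree_mul hy0 hz0
  obtain ⟨l1, d1⟩ := pos_lead_add lxy lxz
  obtain ⟨lS, dS⟩ := pos_lead_add l1 lyz
  have hS0 : (x*y + x*z + y*z) ≠ 0 := leadingCoeff_ne_zero.mp (ne_of_gt lS)
  -- the linear factor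
  have hn₁' : (n₁ : ℚ) ≠ 0 := Int.cast_ne_zero.mpr (ne_of_gt hn₁)
  have dL : (C (n₀ : ℚ) + C (n₁ : ℚ) * X).natDegree = 1 := by
    rw [add_comm]; exact natDegree_linear hn₁'
  have hL0 : (C (n₀ : ℚ) + C (n₁ : ℚ) * X) ≠ 0 := by
    intro h; rw [h] at dL; simp at dL
  -- degrees of both sides
  have hm' : (m : ℚ) ≠ 0 := Int.cast_ne_zero.mpr (ne_of_gt hm)
  have hdegL : (C (m : ℚ) * (x * y * z)).natDegree
      = x.natDegree + y.natDegree + z.natDegree := by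
    rw [natDegree_C_mul hm', natDegree_mul (mul_ne_zero hx0 hy0) hz0, dxy]
  have hdegR : ((C (n₀ : ℚ) + C (n₁ : ℚ) * X) * (x * y + x * z + y * z)).natDegree
      = 1 + max (max (x.natDegree + y.natDegree) (x.natDegree + z.natDegree))
            (y.natDegree + z.natDegree) := by
    rw [natDegree_mul hL0 hS0, dL, dS, d1, dxy, dxz, dyz]
  have := congrArg natDegree heq
  rw [hdegL, hdegR] at this
  omega
end

section
/- (Lemma 2.) Let m, n₀, n₁ be positive integers and let x, y, z ∈ ℚ[λ] be polynomials with positive values on the natural numbers satisfying m·x·y·z = (n₀ + n₁·λ)·(x·y + x·z + y·z). If two of the three polynomials have degree 1, then the degree of the third polynomial is at most 3. -/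
open Polynomial

lemma lemma2_aux (m : ℚ) (n : Polynomial ℚ) (hn1 : n.natDegree = 1) (hn : n ≠ 0)
    (x y z : Polynomial ℚ) (hx0 : x ≠ 0) (hy0 : y ≠ 0)
    (heq : C m * (x * y * z) = n * (x * y + x * z + y * z))
    (hx : x.natDegree = 1) (hy : y.natDegree = 1) : z.natDegree ≤ 3 := by
  have hkey : z * (C m * (x * y) - n * (x + y)) = n * (x * y) := by
    linear_combination heq
  have hr : n * (x * y) ≠ 0 := mul_ne_zero hn (mul_ne_zero hx0 hy0)
  have hz : z ≠ 0 := by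
    rintro rfl
    simp only [zero_mul] at hkey
    exact hr hkey.symm
  have hD : (C m * (x * y) - n * (x + y)) ≠ 0 := by
    intro h
    rw [h, mul_zero] at hkey
    exact hr hkey.symm
  have h1 : z.natDegree + (C m * (x * y) - n * (x + y)).natDegree = 3 := by
    rw [← natDegree_mul hz hD, hkey, natDegree_mul hn (mul_ne_zero hx0 hy0),
      natDegree_mul hx0 hy0, hn1, hx, hy]
  omega

/-- Lemma 2: if two of the three polynomials of a rational polynomial solution
of (2) have degree 1, then the third has degree at most 3. -/
theorem lemma2 (m n₀ n₁ : ℤ) (hm : 0 < m) (hn₀ : 0 < n₀) (hn₁ : 0 < n₁)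
    (x y z : Polynomial ℚ) (hsol : IsRatPolySolution m n₀ n₁ x y z) :
    (x.natDegree = 1 → y.natDegree = 1 → z.natDegree ≤ 3) ∧
    (x.natDegree = 1 → z.natDegree = 1 → y.natDegree ≤ 3) ∧
    (y.natDegree = 1 → z.natDegree = 1 → x.natDegree ≤ 3) := by
  obtain ⟨hx, hy, hz, heq⟩ := hsol
  have hn₁' : (n₁ : ℚ) ≠ 0 := Int.cast_ne_zero.mpr hn₁.ne'
  have hn1 : (C (n₀ : ℚ) + C (n₁ : ℚ) * X).natDegree = 1 := by
    rw [add_comm]; exact natDegree_linear hn₁'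
  have hn : (C (n₀ : ℚ) + C (n₁ : ℚ) * X) ≠ 0 := by
    intro h; rw [h] at hn1; simp at hn1
  have hx0 : x ≠ 0 := by
    intro h; have := hx 0; rw [h] at this; simp at this
  have hy0 : y ≠ 0 := by
    intro h; have := hy 0; rw [h] at this; simp at this
  have hz0 : z ≠ 0 := by
    intro h; have := hz 0; rw [h] at this; simp at this
  refine ⟨fun h1 h2 => lemma2_aux (m:ℚ) _ hn1 hn x y z hx0 hy0 heq h1 h2,
    fun h1 h2 => lemma2_aux (m:ℚ) _ hn1 hn x z y hx0 hz0 (by linear_combination heq) h1 h2,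
    fun h1 h2 => lemma2_aux (m:ℚ) _ hn1 hn y z x hy0 hz0 (by linear_combination heq) h1 h2⟩
end

section
/- (Lemma 3.) Let m, n₀, n₁ be positive integers and let x, y, z ∈ ℚ[λ] be polynomials with positive values on the natural numbers satisfying m·x·y·z = (n₀ + n₁·λ)·(x·y + x·z + y·z). If deg x ≥ 2 and deg y ≥ 2 and z(λ) = z₀ + z₁·λ has degree 1, then m·z₁ = n₁, i.e. the leading coefficient of z equals n₁/m. -/
open Polynomial

/-- Lemma 3: if `x` and `y` have degree at least 2 and `z` has degree 1,
then the leading coefficient `z₁` of `z` satisfies `m·z₁ = n₁`. -/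
theorem lemma3 (m n₀ n₁ : ℤ) (hm : 0 < m) (hn₀ : 0 < n₀) (hn₁ : 0 < n₁)
    (x y z : Polynomial ℚ) (hsol : IsRatPolySolution m n₀ n₁ x y z)
    (hx : 2 ≤ x.natDegree) (hy : 2 ≤ y.natDegree) (hz : z.natDegree = 1) :
    (m : ℚ) * z.coeff 1 = (n₁ : ℚ) := by
  obtain ⟨hxp, hyp, hzp, heq⟩ := hsol
  have hx0 : x ≠ 0 := fun h => by simpa [h] using hxp 0
  have hy0 : y ≠ 0 := fun h => by simpa [h] using hyp 0
  have hz0 : z ≠ 0 := fun h => by simpa [h] using hzp 0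
  set dx := x.natDegree with hdx
  set dy := y.natDegree with hdy
  have hxyd : (x * y).natDegree = dx + dy := natDegree_mul hx0 hy0
  have hxzle : (x * z).natDegree ≤ dx + 1 := by
    simpa [hz] using natDegree_mul_le (p := x) (q := z)
  have hyzle : (y * z).natDegree ≤ dy + 1 := by
    simpa [hz] using natDegree_mul_le (p := y) (q := z)
  set S := x * y + x * z + y * z with hS
  have hSd : S.coeff (dx + dy) = x.leadingCoeff * y.leadingCoeff := by
    have h1 : (x * y).coeff (dx + dy) = x.leadingCoeff * y.leadingCoeff :=
      coeff_mul_degree_add_degree x y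
    have h2 : (x * z).coeff (dx + dy) = 0 :=
      coeff_eq_zero_of_natDegree_lt (lt_of_le_of_lt hxzle (by omega))
    have h3 : (y * z).coeff (dx + dy) = 0 :=
      coeff_eq_zero_of_natDegree_lt (lt_of_le_of_lt hyzle (by omega))
    simp [hS, coeff_add, h1, h2, h3]
  have hShigh : S.coeff (dx + dy + 1) = 0 := by
    apply coeff_eq_zero_of_natDegree_lt
    have h1 := natDegree_add_le (x * y + x * z) (y * z)
    have h2 := natDegree_add_le (x * y) (x * z)
    rw [hS]
    omega
  have hN := congrArg (fun p => p.coeff (dx + dy + 1)) heq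
  have hlz : z.leadingCoeff = z.coeff 1 := by rw [leadingCoeff, hz]
  have hlhs : (C (m : ℚ) * (x * y * z)).coeff (dx + dy + 1)
      = (m : ℚ) * (x.leadingCoeff * y.leadingCoeff * z.coeff 1) := by
    have h4 : (x * y * z).coeff (dx + dy + 1)
        = x.leadingCoeff * y.leadingCoeff * z.coeff 1 := by
      have h5 := coeff_mul_degree_add_degree (x * y) z
      rw [hxyd, hz, leadingCoeff_mul, hlz] at h5
      exact h5
    rw [coeff_C_mul, h4]
  have hrhs : ((C (n₀ : ℚ) + C (n₁ : ℚ) * X) * S).coeff (dx + dy + 1)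
      = (n₁ : ℚ) * (x.leadingCoeff * y.leadingCoeff) := by
    rw [add_mul, coeff_add, coeff_C_mul, hShigh, mul_zero, zero_add,
      mul_assoc, coeff_C_mul, coeff_X_mul, hSd]
  rw [hlhs, hrhs] at hN
  have hxl : x.leadingCoeff ≠ 0 := leadingCoeff_ne_zero.2 hx0
  have hyl : y.leadingCoeff ≠ 0 := leadingCoeff_ne_zero.2 hy0
  have key : ((m : ℚ) * z.coeff 1) * (x.leadingCoeff * y.leadingCoeff)
      = (n₁ : ℚ) * (x.leadingCoeff * y.leadingCoeff) := by linear_combination hN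
  exact mul_right_cancel₀ (mul_ne_zero hxl hyl) key
end

section
/- (Lemma 4.) Let m, n₀, n₁ be positive integers and let x(λ) = x₀ + x₁·λ, y(λ) = y₀ + y₁·λ, z(λ) = z₀ + z₁·λ be degree-1 polynomials in ℚ[λ] with positive values on the natural numbers satisfying m·x·y·z = (n₀ + n₁·λ)·(x·y + x·z + y·z). Then n₀·x₁ = n₁·x₀, n₀·y₁ = n₁·y₀ and n₀·z₁ = n₁·z₀ (i.e. x₁ = x₀·n₁/n₀, y₁ = y₀·n₁/n₀, z₁ = z₀·n₁/n₀). -/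
open Polynomial

lemma sol_rot {m n₀ n₁ : ℤ} {x y z : Polynomial ℚ}
    (h : IsRatPolySolution m n₀ n₁ x y z) : IsRatPolySolution m n₀ n₁ y z x := by
  obtain ⟨h1, h2, h3, h4⟩ := h
  exact ⟨h2, h3, h1, by linear_combination h4⟩

lemma lin_decomp {x : Polynomial ℚ} (hx : x.natDegree ≤ 1) {r : ℚ}
    (h0 : x.eval r = 0) : x = C (x.coeff 1) * (X - C r) := by
  have hx' := Polynomial.eq_X_add_C_of_natDegree_le_one hx
  rw [hx'] at h0
  simp only [eval_add, eval_mul, eval_C, eval_X] at h0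
  have ha : x.coeff 0 = -(x.coeff 1 * r) := by linarith
  conv_lhs => rw [hx']
  rw [ha, map_neg, C_mul]
  ring

lemma coeff_one_ne_zero {x : Polynomial ℚ} (hx : x.natDegree = 1) :
    x.coeff 1 ≠ 0 := by
  have hx0 : x ≠ 0 := fun h => by simp [h] at hx
  have : x.coeff 1 = x.leadingCoeff := by rw [Polynomial.leadingCoeff, hx]
  rw [this]
  exact Polynomial.leadingCoeff_ne_zero.mpr hx0

lemma nn_rw {n₀ n₁ : ℤ} (hn₁ : 0 < n₁) :
    (C (n₀ : ℚ) + C (n₁ : ℚ) * X : Polynomial ℚ)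
      = C (n₁ : ℚ) * (X - C (-(n₀ : ℚ)/(n₁ : ℚ))) := by
  have hn₁' : (n₁ : ℚ) ≠ 0 := Int.cast_ne_zero.mpr hn₁.ne'
  have h : (n₁ : ℚ) * (-(n₀ : ℚ)/(n₁ : ℚ)) = -(n₀ : ℚ) := by field_simp
  rw [mul_sub, ← C_mul, h, map_neg, sub_neg_eq_add, add_comm]

/-- If `x` vanishes at `r = -n₀/n₁`, then `y` or `z` does. -/
lemma L1 (m n₀ n₁ : ℤ) (hm : 0 < m) (hn₀ : 0 < n₀) (hn₁ : 0 < n₁)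
    (x y z : Polynomial ℚ) (hsol : IsRatPolySolution m n₀ n₁ x y z)
    (hx : x.natDegree = 1)
    (hx0 : x.eval (-(n₀ : ℚ)/(n₁ : ℚ)) = 0) :
    y.eval (-(n₀ : ℚ)/(n₁ : ℚ)) = 0 ∨ z.eval (-(n₀ : ℚ)/(n₁ : ℚ)) = 0 := by
  set r : ℚ := -(n₀ : ℚ)/(n₁ : ℚ) with hr
  obtain ⟨hxp, hyp, hzp, heq⟩ := hsol
  have hb : x.coeff 1 ≠ 0 := coeff_one_ne_zero hx
  have hxd := lin_decomp hx.le hx0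
  set b : ℚ := x.coeff 1
  rw [hxd, nn_rw hn₁, ← hr] at heq
  have heq2 : (X - C r) * (C (m : ℚ) * C b * (y * z))
      = (X - C r) * (C (n₁ : ℚ) *
        (C b * (X - C r) * y + C b * (X - C r) * z + y * z)) := by
    linear_combination heq
  have Eq1 := mul_left_cancel₀ (X_sub_C_ne_zero r) heq2
  by_contra hcon
  push_neg at hcon
  obtain ⟨hy0, hz0⟩ := hcon
  -- evaluate Eq1 at r
  have hev := congrArg (Polynomial.eval r) Eq1
  simp only [eval_mul, eval_add, eval_sub, eval_C, eval_X, sub_self, mul_zero,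
    zero_mul, zero_add, add_zero] at hev
  have hyz : y.eval r * z.eval r ≠ 0 := mul_ne_zero hy0 hz0
  have hmb : (m : ℚ) * b = (n₁ : ℚ) := by
    have h' : ((m : ℚ) * b - (n₁ : ℚ)) * (y.eval r * z.eval r) = 0 := by
      linear_combination hev
    rcases mul_eq_zero.mp h' with h | h
    · linarith
    · exact absurd h hyz
  have hc : C (m : ℚ) * C b = C (n₁ : ℚ) := by rw [← C_mul, hmb]
  have Eq3 : C (n₁ : ℚ) * (C b * (X - C r) * (y + z)) = 0 := by
    linear_combination (y * z) * hc - Eq1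
  -- evaluate at 0
  have hev0 := congrArg (Polynomial.eval 0) Eq3
  simp only [eval_mul, eval_add, eval_sub, eval_C, eval_X, eval_zero,
    zero_sub] at hev0
  have hn₁' : (n₁ : ℚ) ≠ 0 := Int.cast_ne_zero.mpr hn₁.ne'
  have hrlt : r < 0 := by
    have h0 : (0 : ℚ) < (n₀ : ℚ)/(n₁ : ℚ) := by positivity
    show -(n₀ : ℚ)/(n₁ : ℚ) < 0
    rw [neg_div]; linarith
  have hrne : -r ≠ 0 := by
    have : (0 : ℚ) < -r := by linarith
    exact this.ne'
  have hyz0 : (0 : ℚ) < y.eval 0 + z.eval 0 := by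
    have h1 := hyp 0
    have h2 := hzp 0
    push_cast at h1 h2
    linarith
  exact (mul_ne_zero hn₁'
    (mul_ne_zero (mul_ne_zero hb hrne) hyz0.ne')) hev0

/-- If `x` and `y` vanish at `r = -n₀/n₁`, then `z` does too. -/
lemma L2 (m n₀ n₁ : ℤ) (hm : 0 < m) (hn₀ : 0 < n₀) (hn₁ : 0 < n₁)
    (x y z : Polynomial ℚ) (hsol : IsRatPolySolution m n₀ n₁ x y z)
    (hx : x.natDegree = 1) (hy : y.natDegree = 1)
    (hx0 : x.eval (-(n₀ : ℚ)/(n₁ : ℚ)) = 0)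
    (hy0 : y.eval (-(n₀ : ℚ)/(n₁ : ℚ)) = 0) :
    z.eval (-(n₀ : ℚ)/(n₁ : ℚ)) = 0 := by
  set r : ℚ := -(n₀ : ℚ)/(n₁ : ℚ) with hr
  obtain ⟨hxp, hyp, hzp, heq⟩ := hsol
  have hb : x.coeff 1 ≠ 0 := coeff_one_ne_zero hx
  have hd : y.coeff 1 ≠ 0 := coeff_one_ne_zero hy
  have hxd := lin_decomp hx.le hx0
  have hyd := lin_decomp hy.le hy0
  set b : ℚ := x.coeff 1
  set d : ℚ := y.coeff 1
  rw [hxd, hyd, nn_rw hn₁, ← hr] at heq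
  have hpne : ((X - C r) * (X - C r) : Polynomial ℚ) ≠ 0 :=
    mul_ne_zero (X_sub_C_ne_zero r) (X_sub_C_ne_zero r)
  have heq2 : ((X - C r) * (X - C r)) * (C (m : ℚ) * C b * C d * z)
      = ((X - C r) * (X - C r)) * (C (n₁ : ℚ) *
        (C b * C d * (X - C r) + (C b + C d) * z)) := by
    linear_combination heq
  have Eq2 := mul_left_cancel₀ hpne heq2
  by_contra hz0
  -- evaluate Eq2 at r
  have hev := congrArg (Polynomial.eval r) Eq2
  simp only [eval_mul, eval_add, eval_sub, eval_C, eval_X, sub_self, mul_zero,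
    zero_mul, zero_add, add_zero] at hev
  have hmbd : (m : ℚ) * b * d = (n₁ : ℚ) * (b + d) := by
    have h' : ((m : ℚ) * b * d - (n₁ : ℚ) * (b + d)) * z.eval r = 0 := by
      linear_combination hev
    rcases mul_eq_zero.mp h' with h | h
    · linarith
    · exact absurd h hz0
  have hc : C (m : ℚ) * C b * C d = C (n₁ : ℚ) * (C b + C d) := by
    rw [← C_mul, ← C_mul, ← C_add, ← C_mul, hmbd]
  have Eq3 : C (n₁ : ℚ) * (C b * C d * (X - C r)) = 0 := by
    linear_combination z * hc - Eq2
  have hev0 := congrArg (Polynomial.eval 0) Eq3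
  simp only [eval_mul, eval_sub, eval_C, eval_X, eval_zero] at hev0
  have hn₁' : (n₁ : ℚ) ≠ 0 := Int.cast_ne_zero.mpr hn₁.ne'
  have hrlt : r < 0 := by
    have h0 : (0 : ℚ) < (n₀ : ℚ)/(n₁ : ℚ) := by positivity
    show -(n₀ : ℚ)/(n₁ : ℚ) < 0
    rw [neg_div]; linarith
  have hrne : (0 : ℚ) - r ≠ 0 := by
    have : (0 : ℚ) < 0 - r := by linarith
    exact this.ne'
  exact (mul_ne_zero hn₁' (mul_ne_zero (mul_ne_zero hb hd) hrne)) hev0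

/-- Under the hypotheses, `x` vanishes at `r = -n₀/n₁`. -/
lemma vanish (m n₀ n₁ : ℤ) (hm : 0 < m) (hn₀ : 0 < n₀) (hn₁ : 0 < n₁)
    (x y z : Polynomial ℚ) (hsol : IsRatPolySolution m n₀ n₁ x y z)
    (hx : x.natDegree = 1) (hy : y.natDegree = 1) (hz : z.natDegree = 1) :
    x.eval (-(n₀ : ℚ)/(n₁ : ℚ)) = 0 := by
  set r : ℚ := -(n₀ : ℚ)/(n₁ : ℚ) with hr
  obtain ⟨hxp, hyp, hzp, heq⟩ := hsol
  have hn₁' : (n₁ : ℚ) ≠ 0 := Int.cast_ne_zero.mpr hn₁.ne'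
  have hm' : (m : ℚ) ≠ 0 := Int.cast_ne_zero.mpr hm.ne'
  have hnr : (n₀ : ℚ) + (n₁ : ℚ) * r = 0 := by
    show (n₀ : ℚ) + (n₁ : ℚ) * (-(n₀ : ℚ)/(n₁ : ℚ)) = 0
    field_simp
    ring
  have hev := congrArg (Polynomial.eval r) heq
  simp only [eval_mul, eval_add, eval_C, eval_X] at hev
  rw [hnr, zero_mul] at hev
  have h0 : x.eval r * y.eval r * z.eval r = 0 := by
    rcases mul_eq_zero.mp hev with h | h
    · exact absurd h hm'
    · exact h
  have hsol' : IsRatPolySolution m n₀ n₁ x y z := ⟨hxp, hyp, hzp, heq⟩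
  rcases mul_eq_zero.mp h0 with h | hz0
  · rcases mul_eq_zero.mp h with hx0 | hy0
    · exact hx0
    · -- y vanishes; use ordering (y, z, x)
      have hsol2 := sol_rot hsol'
      rcases L1 m n₀ n₁ hm hn₀ hn₁ y z x hsol2 hy hy0 with h | h
      · exact L2 m n₀ n₁ hm hn₀ hn₁ y z x hsol2 hy hz hy0 h
      · exact h
  · -- z vanishes; use ordering (z, x, y)
    have hsol3 := sol_rot (sol_rot hsol')
    rcases L1 m n₀ n₁ hm hn₀ hn₁ z x y hsol3 hz hz0 with h | h
    · exact h
    · have hsol2 := sol_rot hsol'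
      exact L2 m n₀ n₁ hm hn₀ hn₁ y z x hsol2 hy hz h hz0

lemma eval_to_coeff {n₀ n₁ : ℤ} (hn₁ : 0 < n₁) {x : Polynomial ℚ}
    (hx : x.natDegree = 1) (h0 : x.eval (-(n₀ : ℚ)/(n₁ : ℚ)) = 0) :
    (n₀ : ℚ) * x.coeff 1 = (n₁ : ℚ) * x.coeff 0 := by
  have hn₁' : (n₁ : ℚ) ≠ 0 := Int.cast_ne_zero.mpr hn₁.ne'
  have hx' := Polynomial.eq_X_add_C_of_natDegree_le_one hx.le
  rw [hx'] at h0
  simp only [eval_add, eval_mul, eval_C, eval_X] at h0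
  field_simp at h0
  linarith

/-- Lemma 4: if all three polynomials of a rational polynomial solution of (2)
have degree 1, then `x₁ = x₀·n₁/n₀`, `y₁ = y₀·n₁/n₀`, `z₁ = z₀·n₁/n₀`. -/
theorem lemma4 (m n₀ n₁ : ℤ) (hm : 0 < m) (hn₀ : 0 < n₀) (hn₁ : 0 < n₁)
    (x y z : Polynomial ℚ) (hsol : IsRatPolySolution m n₀ n₁ x y z)
    (hx : x.natDegree = 1) (hy : y.natDegree = 1) (hz : z.natDegree = 1) :
    (n₀ : ℚ) * x.coeff 1 = (n₁ : ℚ) * x.coeff 0 ∧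
    (n₀ : ℚ) * y.coeff 1 = (n₁ : ℚ) * y.coeff 0 ∧
    (n₀ : ℚ) * z.coeff 1 = (n₁ : ℚ) * z.coeff 0 := by
  have h1 := vanish m n₀ n₁ hm hn₀ hn₁ x y z hsol hx hy hz
  have h2 := vanish m n₀ n₁ hm hn₀ hn₁ y z x (sol_rot hsol) hy hz hx
  have h3 := vanish m n₀ n₁ hm hn₀ hn₁ z x y (sol_rot (sol_rot hsol)) hz hx hy
  exact ⟨eval_to_coeff hn₁ hx h1, eval_to_coeff hn₁ hy h2, eval_to_coeff hn₁ hz h3⟩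
end

section
/- (Lemma 5.) Let m, n₀, n₁ be positive integers. There are no polynomials x, y, z ∈ ℝ[λ] with x(t) > 0, y(t) > 0, z(t) > 0 for every natural number t, with deg x = deg z = 1 and deg y = 3, satisfying the polynomial identity m·x·y·z = (n₀ + n₁·λ)·(x·y + x·z + y·z). -/
/-!
Solving (2) for `y` gives `y * (m x z - n (x + z)) = n x z`. Both sides have degree `3 = deg y`,
so the bracket is a constant `c`, positive by evaluation at `0`. Then
`(m x - n) (m z - n) = m c + n²`: the right side is a quadratic without real zeros, whereas a
product of two polynomials of degree `≤ 1` that has degree `2` has a linear factor, hence a real zero.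
-/

open Polynomial

theorem Polynomial.eq_C_of_mul_eq_of_natDegree_eq {R : Type*} [CommRing R] [NoZeroDivisors R]
    {p q r : R[X]} (h : p * q = r) (hr : r ≠ 0) (hdeg : r.natDegree = p.natDegree) :
    q = C (q.coeff 0) := by
  have hp : p ≠ 0 := by rintro rfl; exact hr (by rw [← h, zero_mul])
  have hq : q ≠ 0 := by rintro rfl; exact hr (by rw [← h, mul_zero])
  have hsum := natDegree_mul hp hq
  rw [h] at hsum
  exact eq_C_of_natDegree_eq_zero (by omega)

theorem Polynomial.exists_isRoot_mul_of_natDegree_le_one {K : Type*} [Field K] {p q : K[X]}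
    (hp : p.natDegree ≤ 1) (hq : q.natDegree ≤ 1) (hpq : (p * q).natDegree = 2) :
    ∃ t, (p * q).IsRoot t := by
  have hpq0 : p * q ≠ 0 := by rintro h; simp [h] at hpq
  have hp1 : p.natDegree = 1 := by
    have := natDegree_mul (left_ne_zero_of_mul hpq0) (right_ne_zero_of_mul hpq0)
    omega
  obtain ⟨t, ht⟩ := exists_root_of_degree_eq_one
    ((degree_eq_iff_natDegree_eq (left_ne_zero_of_mul hpq0)).2 hp1)
  exact ⟨t, by simp [ht.eq_zero]⟩

theorem Polynomial.mul_ne_C_add_sq_of_natDegree_le_one {p q n : ℝ[X]} {c : ℝ}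
    (hp : p.natDegree ≤ 1) (hq : q.natDegree ≤ 1) (hn : n.natDegree = 1) (hc : 0 < c) :
    p * q ≠ C c + n ^ 2 := by
  intro h
  obtain ⟨t, ht⟩ := exists_isRoot_mul_of_natDegree_le_one hp hq
    (by rw [h, add_comm, natDegree_add_C, natDegree_pow, hn])
  rw [h, IsRoot, eval_add, eval_C, eval_pow] at ht
  linarith [sq_nonneg (n.eval t)]

/-- Lemma 5: there is no real polynomial solution of equation (2) with
`deg x = deg z = 1` and `deg y = 3`. -/
theorem lemma5 (m n₀ n₁ : ℤ) (hm : 0 < m) (hn₀ : 0 < n₀) (hn₁ : 0 < n₁) :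
    ¬ ∃ x y z : Polynomial ℝ,
      (∀ t : ℕ, 0 < x.eval (t : ℝ)) ∧ (∀ t : ℕ, 0 < y.eval (t : ℝ)) ∧
      (∀ t : ℕ, 0 < z.eval (t : ℝ)) ∧
      C (m : ℝ) * (x * y * z) =
        (C (n₀ : ℝ) + C (n₁ : ℝ) * X) * (x * y + x * z + y * z) ∧
      x.natDegree = 1 ∧ z.natDegree = 1 ∧ y.natDegree = 3 := by
  rintro ⟨x, y, z, hx, hy, hz, hid, hdx, hdz, hdy⟩
  set n : ℝ[X] := C (n₀ : ℝ) + C (n₁ : ℝ) * X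
  have hdn : n.natDegree = 1 := by
    simp only [n]; rw [add_comm]; exact natDegree_linear (by exact_mod_cast hn₁.ne')
  have hne : ∀ p : ℝ[X], p.natDegree = 1 → p ≠ 0 := fun p hp h => by simp [h] at hp
  have hdnxz : (n * (x * z)).natDegree = y.natDegree := by
    rw [natDegree_mul (hne n hdn) (mul_ne_zero (hne x hdx) (hne z hdz)),
      natDegree_mul (hne x hdx) (hne z hdz), hdn, hdx, hdz, hdy]
  have hy_eq : y * (C (m : ℝ) * (x * z) - n * (x + z)) = n * (x * z) := by
    linear_combination hid
  set c := (C (m : ℝ) * (x * z) - n * (x + z)).coeff 0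
  have hc := eq_C_of_mul_eq_of_natDegree_eq hy_eq
    (mul_ne_zero (hne n hdn) (mul_ne_zero (hne x hdx) (hne z hdz))) hdnxz
  have hc0 : 0 < c := by
    have hnxz : 0 < (n * (x * z)).eval 0 := by
      have hn₀R : (0 : ℝ) < n₀ := by exact_mod_cast hn₀
      simpa [n] using mul_pos hn₀R (mul_pos (hx 0) (hz 0))
    have h0 := congrArg (eval 0) hy_eq
    rw [hc, eval_mul, eval_C] at h0
    exact pos_of_mul_pos_right (h0 ▸ hnxz) (by simpa using (hy 0).le)
  have hfactor : (C (m : ℝ) * x - n) * (C (m : ℝ) * z - n) = C ((m : ℝ) * c) + n ^ 2 := by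
    rw [C_mul]; linear_combination C (m : ℝ) * hc
  have hmR : (0 : ℝ) < m := by exact_mod_cast hm
  exact mul_ne_C_add_sq_of_natDegree_le_one
    (natDegree_sub_le_of_le (natDegree_C_mul_le _ _ |>.trans hdx.le) hdn.le)
    (natDegree_sub_le_of_le (natDegree_C_mul_le _ _ |>.trans hdz.le) hdn.le) hdn
    (mul_pos hmR hc0) hfactor
end

section
/- (Lemma 6.) Let m, n₀, n₁ be positive integers and let x, y, z ∈ ℚ[λ] have positive values on the natural numbers, with deg x = deg z = 1 and deg y = 2, satisfying m·x·y·z = (n₀ + n₁·λ)·(x·y + x·z + y·z). Write x₀ = x(0), y₀ = y(0), z₀ = z(0). Then, possibly after interchanging x and z, the solution is one of exactly two forms: the '+' solution x(λ) = x₀ + x₀·(n₁/n₀)·λ, z(λ) = z₀ + (n₁/n₀)·(y₀·z₀/(y₀+z₀))·λ, y(λ) = y₀ + y₀·(n₁/n₀)·(1 + y₀/(y₀+z₀))·λ + (y₀·n₁/n₀)²·(1/(y₀+z₀))·λ²; or the '−' solution x(λ) = x₀ + (n₁/m)·((x₀+z₀)/z₀)·λ, z(λ) = z₀ + (n₁/m)·((x₀+z₀)/x₀)·λ,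 y(λ) = y₀ + (2·y₀·n₁/n₀ − n₁/m)·λ + (n₁/n₀)·(y₀·n₁/n₀ − n₁/m)·λ². -/
open Polynomial

set_option maxHeartbeats 1600000

private lemma rep_deg1 (p : Polynomial ℚ) (h : p.natDegree ≤ 1) :
    p = C (p.coeff 0) + C (p.coeff 1) * X := by
  conv_lhs => rw [Polynomial.eq_X_add_C_of_natDegree_le_one h]
  ring

private lemma rep_deg2 (p : Polynomial ℚ) (h : p.natDegree ≤ 2) :
    p = C (p.coeff 0) + C (p.coeff 1) * X + C (p.coeff 2) * X ^ 2 := by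
  ext n
  match n with
  | 0 => simp
  | 1 => simp
  | 2 => simp
  | (k+3) =>
    rw [Polynomial.coeff_eq_zero_of_natDegree_lt (lt_of_le_of_lt h (by omega))]
    simp [Polynomial.coeff_X_pow]


private lemma keySplit (x0 y0 z0 a b c d m n0 n1 : ℚ)
    (hm : m ≠ 0) (hn1 : n1 ≠ 0) (ha : a ≠ 0)
    (hE0 : ((1)*x0*y0*z0*m + (-1)*x0*y0*n0 + (-1)*x0*z0*n0 + (-1)*y0*z0*n0) = 0) (hE1 : ((1)*x0*y0*c*m + (-1)*x0*y0*n1 + (1)*x0*z0*b*m + (-1)*x0*z0*n1 + (-1)*x0*b*n0 + (-1)*x0*c*n0 + (1)*y0*z0*a*m + (-1)*y0*z0*n1 + (-1)*y0*a*n0 + (-1)*y0*c*n0 + (-1)*z0*a*n0 + (-1)*z0*b*n0) = 0)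
    (hE2 : ((1)*x0*z0*d*m + (1)*x0*b*c*m + (-1)*x0*b*n1 + (-1)*x0*c*n1 + (-1)*x0*d*n0 + (1)*y0*a*c*m + (-1)*y0*a*n1 + (-1)*y0*c*n1 + (1)*z0*a*b*m + (-1)*z0*a*n1 + (-1)*z0*b*n1 + (-1)*z0*d*n0 + (-1)*a*b*n0 + (-1)*a*c*n0 + (-1)*b*c*n0) = 0) (hE3 : ((1)*x0*c*d*m + (-1)*x0*d*n1 + (1)*z0*a*d*m + (-1)*z0*d*n1 + (1)*a*b*c*m + (-1)*a*b*n1 + (-1)*a*c*n1 + (-1)*a*d*n0 + (-1)*b*c*n1 + (-1)*c*d*n0) = 0)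
    (hK : m*a*c - n1*(a+c) = 0) :
    (n0*a - n1*x0 = 0) ∨ (n0*c - n1*z0 = 0) ∨ (m*z0*a - n1*(x0+z0) = 0) := by
  have hman : m*a - n1 ≠ 0 := by
    intro h
    exact mul_ne_zero hn1 ha (by linear_combination c*h - hK)
  have he1 : ((1)*x0*y0*n1^2 + (1)*x0*z0*a*b*m^2 + (-1)*x0*z0*a*m*n1 + (-1)*x0*z0*b*m*n1 + (1)*x0*z0*n1^2 + (-1)*x0*a*b*m*n0 + (-1)*x0*a*n0*n1 + (1)*x0*b*n0*n1 + (1)*y0*z0*a^2*m^2 + (-2)*y0*z0*a*m*n1 + (1)*y0*z0*n1^2 + (-1)*y0*a^2*m*n0 + (-1)*z0*a^2*m*n0 + (-1)*z0*a*b*m*n0 + (1)*z0*a*n0*n1 + (1)*z0*b*n0*n1) = 0 := by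
    linear_combination (m*a-n1) * hE1 - ((1)*x0*y0*m + (-1)*x0*n0 + (-1)*y0*n0) * hK
  have he2 : ((1)*x0*z0*a*d*m^2 + (-1)*x0*z0*d*m*n1 + (-1)*x0*a*d*m*n0 + (-1)*x0*a*n1^2 + (1)*x0*b*n1^2 + (1)*x0*d*n0*n1 + (1)*z0*a^2*b*m^2 + (-1)*z0*a^2*m*n1 + (-2)*z0*a*b*m*n1 + (-1)*z0*a*d*m*n0 + (1)*z0*a*n1^2 + (1)*z0*b*n1^2 + (1)*z0*d*n0*n1 + (-1)*a^2*b*m*n0 + (-1)*a^2*n0*n1) = 0 := by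
    linear_combination (m*a-n1) * hE2 - ((1)*x0*b*m + (-1)*x0*n1 + (1)*y0*a*m + (-1)*y0*n1 + (-1)*a*n0 + (-1)*b*n0) * hK
  have he3 : ((1)*x0*d*n1^2 + (1)*z0*a^2*d*m^2 + (-2)*z0*a*d*m*n1 + (1)*z0*d*n1^2 + (-1)*a^2*d*m*n0 + (-1)*a^2*n1^2) = 0 := by
    linear_combination (m*a-n1) * hE3 - ((1)*x0*d*m + (1)*a*b*m + (-1)*a*n1 + (-1)*b*n1 + (-1)*d*n0) * hK
  have hf2 : ((-1)*x0^2*a*n1^4 + (1)*x0^2*b*n1^4 + (2)*x0*z0*a^2*b*m^2*n1^2 + (-4)*x0*z0*a*b*m*n1^3 + (2)*x0*z0*b*n1^4 + (-2)*x0*a^2*b*m*n0*n1^2 + (1)*z0^2*a^4*b*m^4 + (-1)*z0^2*a^4*m^3*n1 + (-4)*z0^2*a^3*b*m^3*n1 + (3)*z0^2*a^3*m^2*n1^2 + (6)*z0^2*a^2*b*m^2*n1^2 + (-3)*z0^2*a^2*m*n1^3 + (-4)*z0^2*a*b*m*n1^3 + (1)*z0^2*a*n1^4 + (1)*z0^2*b*n1^4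 + (-2)*z0*a^4*b*m^3*n0 + (4)*z0*a^3*b*m^2*n0*n1 + (-2)*z0*a^2*b*m*n0*n1^2 + (1)*a^4*b*m^2*n0^2 + (1)*a^4*m*n0^2*n1) = 0 := by
    linear_combination ((x0*n1^2 + z0*(m*a-n1)^2 - a^2*m*n0)) * he2 - ((1)*x0*z0*a*m^2 + (-1)*x0*z0*m*n1 + (-1)*x0*a*m*n0 + (1)*x0*n0*n1 + (-1)*z0*a*m*n0 + (1)*z0*n0*n1) * he3
  have hG : ((-1)*x0^3*y0*n1^6 + (-1)*x0^3*z0*a^2*m^2*n1^4 + (2)*x0^3*z0*a*m*n1^5 + (-1)*x0^3*z0*n1^6 + (1)*x0^3*a^2*m*n0*n1^4 + (-3)*x0^2*y0*z0*a^2*m^2*n1^4 + (6)*x0^2*y0*z0*a*m*n1^5 + (-3)*x0^2*y0*z0*n1^6 + (3)*x0^2*y0*a^2*m*n0*n1^4 + (2)*x0^2*z0^2*a^3*m^3*n1^3 + (-6)*x0^2*z0^2*a^2*m^2*n1^4 + (6)*x0^2*z0^2*a*m*n1^5 + (-2)*x0^2*z0^2*n1^6 + (-2)*x0^2*a^3*m*n0^2*n1^3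 + (-3)*x0*y0*z0^2*a^4*m^4*n1^2 + (12)*x0*y0*z0^2*a^3*m^3*n1^3 + (-18)*x0*y0*z0^2*a^2*m^2*n1^4 + (12)*x0*y0*z0^2*a*m*n1^5 + (-3)*x0*y0*z0^2*n1^6 + (6)*x0*y0*z0*a^4*m^3*n0*n1^2 + (-12)*x0*y0*z0*a^3*m^2*n0*n1^3 + (6)*x0*y0*z0*a^2*m*n0*n1^4 + (-3)*x0*y0*a^4*m^2*n0^2*n1^2 + (-1)*x0*z0^3*a^4*m^4*n1^2 + (4)*x0*z0^3*a^3*m^3*n1^3 + (-6)*x0*z0^3*a^2*m^2*n1^4 + (4)*x0*z0^3*a*m*n1^5 + (-1)*x0*z0^3*n1^6 + (1)*x0*a^4*m*n0^3*n1^2 + (-1)*y0*z0^3*a^6*m^6 + (6)*y0*z0^3*a^5*m^5*n1 + (-15)*y0*z0^3*a^4*m^4*n1^2 + (20)*y0*z0^3*a^3*m^3*n1^3 + (-15)*y0*z0^3*a^2*m^2*n1^4 + (6)*y0*z0^3*a*m*n1^5 + (-1)*y0*z0^3*n1^6 + (3)*y0*z0^2*a^6*m^5*n0 + (-12)*y0*z0^2*a^5*m^4*n0*n1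 + (18)*y0*z0^2*a^4*m^3*n0*n1^2 + (-12)*y0*z0^2*a^3*m^2*n0*n1^3 + (3)*y0*z0^2*a^2*m*n0*n1^4 + (-3)*y0*z0*a^6*m^4*n0^2 + (6)*y0*z0*a^5*m^3*n0^2*n1 + (-3)*y0*z0*a^4*m^2*n0^2*n1^2 + (1)*y0*a^6*m^3*n0^3 + (1)*z0^3*a^6*m^5*n0 + (-4)*z0^3*a^5*m^4*n0*n1 + (6)*z0^3*a^4*m^3*n0*n1^2 + (-4)*z0^3*a^3*m^2*n0*n1^3 + (1)*z0^3*a^2*m*n0*n1^4 + (-2)*z0^2*a^6*m^4*n0^2 + (6)*z0^2*a^5*m^3*n0^2*n1 + (-6)*z0^2*a^4*m^2*n0^2*n1^2 + (2)*z0^2*a^3*m*n0^2*n1^3 + (1)*z0*a^6*m^3*n0^3 + (-2)*z0*a^5*m^2*n0^3*n1 + (1)*z0*a^4*m*n0^3*n1^2) = 0 := by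
    linear_combination ((1)*x0*z0*a*m^2 + (-1)*x0*z0*m*n1 + (-1)*x0*a*m*n0 + (1)*x0*n0*n1 + (-1)*z0*a*m*n0 + (1)*z0*n0*n1) * hf2 - ((1)*x0^2*n1^4 + (2)*x0*z0*a^2*m^2*n1^2 + (-4)*x0*z0*a*m*n1^3 + (2)*x0*z0*n1^4 + (-2)*x0*a^2*m*n0*n1^2 + (1)*z0^2*a^4*m^4 + (-4)*z0^2*a^3*m^3*n1 + (6)*z0^2*a^2*m^2*n1^2 + (-4)*z0^2*a*m*n1^3 + (1)*z0^2*n1^4 + (-2)*z0*a^4*m^3*n0 + (4)*z0*a^3*m^2*n0*n1 + (-2)*z0*a^2*m*n0*n1^2 + (1)*a^4*m^2*n0^2) * he1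
  have hfact : m*((n0*a - n1*x0) * ((m*z0*a - n1*(x0+z0)) * (n0*a - z0*(m*a-n1))))^2 = 0 := by
    linear_combination ((-1)*x0^3*n1^6 + (-3)*x0^2*z0*a^2*m^2*n1^4 + (6)*x0^2*z0*a*m*n1^5 + (-3)*x0^2*z0*n1^6 + (3)*x0^2*a^2*m*n0*n1^4 + (-3)*x0*z0^2*a^4*m^4*n1^2 + (12)*x0*z0^2*a^3*m^3*n1^3 + (-18)*x0*z0^2*a^2*m^2*n1^4 + (12)*x0*z0^2*a*m*n1^5 + (-3)*x0*z0^2*n1^6 + (6)*x0*z0*a^4*m^3*n0*n1^2 + (-12)*x0*z0*a^3*m^2*n0*n1^3 + (6)*x0*z0*a^2*m*n0*n1^4 + (-3)*x0*a^4*m^2*n0^2*n1^2 + (-1)*z0^3*a^6*m^6 + (6)*z0^3*a^5*m^5*n1 + (-15)*z0^3*a^4*m^4*n1^2 + (20)*z0^3*a^3*m^3*n1^3 + (-15)*z0^3*a^2*m^2*n1^4 + (6)*z0^3*a*m*n1^5 + (-1)*z0^3*n1^6 + (3)*z0^2*a^6*m^5*n0 + (-12)*z0^2*a^5*m^4*n0*n1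 + (18)*z0^2*a^4*m^3*n0*n1^2 + (-12)*z0^2*a^3*m^2*n0*n1^3 + (3)*z0^2*a^2*m*n0*n1^4 + (-3)*z0*a^6*m^4*n0^2 + (6)*z0*a^5*m^3*n0^2*n1 + (-3)*z0*a^4*m^2*n0^2*n1^2 + (1)*a^6*m^3*n0^3) * hE0 - (m*x0*z0 - n0*(x0+z0)) * hG
  have h2 := (pow_eq_zero_iff two_ne_zero).mp ((mul_eq_zero.mp hfact).resolve_left hm)
  rcases mul_eq_zero.mp h2 with hA | h3
  · exact Or.inl hA
  rcases mul_eq_zero.mp h3 with hB | hC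
  · exact Or.inr (Or.inr hB)
  · refine Or.inr (Or.inl ?_)
    have h5 : (n0*c - n1*z0)*(m*a-n1) = 0 := by linear_combination n0*hK + n1*hC
    exact (mul_eq_zero.mp h5).resolve_right hman


private lemma keyPlus (x0 y0 z0 a b c d m n0 n1 : ℚ)
    (hx0 : 0 < x0) (hy0 : 0 < y0) (hz0 : 0 < z0) (hn0 : 0 < n0) (hn1 : n1 ≠ 0)
    (ha : a ≠ 0) (hd : d ≠ 0)
    (hE0 : ((1)*x0*y0*z0*m + (-1)*x0*y0*n0 + (-1)*x0*z0*n0 + (-1)*y0*z0*n0) = 0) (hE1 : ((1)*x0*y0*c*m + (-1)*x0*y0*n1 + (1)*x0*z0*b*m + (-1)*x0*z0*n1 + (-1)*x0*b*n0 + (-1)*x0*c*n0 + (1)*y0*z0*a*m + (-1)*y0*z0*n1 + (-1)*y0*a*n0 + (-1)*y0*c*n0 + (-1)*z0*a*n0 + (-1)*z0*b*n0) = 0) (hE3 : ((1)*x0*c*d*m + (-1)*x0*d*n1 + (1)*z0*a*d*m + (-1)*z0*d*n1 + (1)*a*b*c*m + (-1)*a*b*n1 + (-1)*a*c*n1 +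 (-1)*a*d*n0 + (-1)*b*c*n1 + (-1)*c*d*n0) = 0)
    (hK : m*a*c - n1*(a+c) = 0) (hA : n0*a - n1*x0 = 0) :
    a = x0 * (n1 / n0) ∧ c = n1 / n0 * (y0 * z0 / (y0 + z0)) ∧
    b = y0 * (n1 / n0) * (1 + y0 / (y0 + z0)) ∧ d = (y0 * n1 / n0) ^ 2 * (1 / (y0 + z0)) := by
  have hn0' : n0 ≠ 0 := ne_of_gt hn0
  have hyz : y0 + z0 ≠ 0 := by positivity
  have hYd : (m*x0*z0 - n0*(x0+z0)) * y0 = n0*(x0*z0) := by linear_combination hE0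
  have hYdne : m*x0*z0 - n0*(x0+z0) ≠ 0 := by
    intro h; rw [h, zero_mul] at hYd
    exact (by positivity : (0:ℚ) < n0*(x0*z0)).ne' hYd.symm
  have hman : m*a - n1 ≠ 0 := by
    intro h
    exact mul_ne_zero hn1 ha (by linear_combination c*h - hK)
  have he3 : ((1)*x0*d*n1^2 + (1)*z0*a^2*d*m^2 + (-2)*z0*a*d*m*n1 + (1)*z0*d*n1^2 + (-1)*a^2*d*m*n0 + (-1)*a^2*n1^2) = 0 := by
    linear_combination (m*a-n1) * hE3 - ((1)*x0*d*m + (1)*a*b*m + (-1)*a*n1 + (-1)*b*n1 + (-1)*d*n0) * hK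
  have hDne : x0*n1^2 + z0*(m*a-n1)^2 - a^2*m*n0 ≠ 0 := by
    intro h
    have h2 : a^2*n1^2 = 0 := by linear_combination d*h - he3
    exact mul_ne_zero (pow_ne_zero 2 ha) (pow_ne_zero 2 hn1) h2
  have hTc0 : (c*(n0*(y0+z0)) - n1*(y0*z0)) * ((m*a-n1) * n0 * (m*x0*z0 - n0*(x0+z0))) = 0 := by
    linear_combination ((1)*x0*y0*z0*m*n0^2 + (-1)*x0*y0*n0^3 + (1)*x0*z0^2*m*n0^2 + (-1)*x0*z0*n0^3 + (-1)*y0*z0*n0^3 + (-1)*z0^2*n0^3) * hK + ((-1)*x0*y0*z0^2*m^2*n1 + (2)*x0*y0*z0*m*n0*n1 + (-1)*x0*y0*n0^2*n1 + (1)*x0*z0^2*m*n0*n1 + (-1)*x0*z0*n0^2*n1 + (1)*y0*z0^2*m*n0*n1 + (-1)*y0*z0*n0^2*n1 + (-1)*z0^2*n0^2*n1) * hA + ((-1)*x0*z0*m*n1^2 + (1)*x0*n0*n1^2 + (1)*z0*n0*n1^2) * hE0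
  have hTc : c*(n0*(y0+z0)) - n1*(y0*z0) = 0 :=
    (mul_eq_zero.mp hTc0).resolve_right
      (mul_ne_zero (mul_ne_zero hman hn0') hYdne)
  have hTd0 : (d*(n0^2*(y0+z0)) - y0^2*n1^2) *
      ((x0*n1^2 + z0*(m*a-n1)^2 - a^2*m*n0) * n0^2 * (m*x0*z0 - n0*(x0+z0))^2) = 0 := by
    linear_combination ((1)*x0^2*y0*z0^2*m^2*n0^4 + (-2)*x0^2*y0*z0*m*n0^5 + (1)*x0^2*y0*n0^6 + (1)*x0^2*z0^3*m^2*n0^4 + (-2)*x0^2*z0^2*m*n0^5 + (1)*x0^2*z0*n0^6 + (-2)*x0*y0*z0^2*m*n0^5 + (2)*x0*y0*z0*n0^6 + (-2)*x0*z0^3*m*n0^5 + (2)*x0*z0^2*n0^6 + (1)*y0*z0^2*n0^6 + (1)*z0^3*n0^6) * he3 + ((-1)*x0^3*y0^2*z0^3*m^4*n1^3 + (3)*x0^3*y0^2*z0^2*m^3*n0*n1^3 + (-3)*x0^3*y0^2*z0*m^2*n0^2*n1^3 + (1)*x0^3*y0^2*m*n0^3*n1^3 + (1)*x0^3*y0*z0^2*m^2*n0^2*n1^3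 + (-2)*x0^3*y0*z0*m*n0^3*n1^3 + (1)*x0^3*y0*n0^4*n1^3 + (1)*x0^3*z0^3*m^2*n0^2*n1^3 + (-2)*x0^3*z0^2*m*n0^3*n1^3 + (1)*x0^3*z0*n0^4*n1^3 + (-1)*x0^2*y0^2*z0^3*a*m^4*n0*n1^2 + (4)*x0^2*y0^2*z0^3*m^3*n0*n1^3 + (3)*x0^2*y0^2*z0^2*a*m^3*n0^2*n1^2 + (-8)*x0^2*y0^2*z0^2*m^2*n0^2*n1^3 + (-3)*x0^2*y0^2*z0*a*m^2*n0^3*n1^2 + (4)*x0^2*y0^2*z0*m*n0^3*n1^3 + (1)*x0^2*y0^2*a*m*n0^4*n1^2 + (1)*x0^2*y0*z0^2*a*m^2*n0^3*n1^2 + (-2)*x0^2*y0*z0^2*m*n0^3*n1^3 + (-2)*x0^2*y0*z0*a*m*n0^4*n1^2 + (2)*x0^2*y0*z0*n0^4*n1^3 + (1)*x0^2*y0*a*n0^5*n1^2 + (1)*x0^2*z0^3*a*m^2*n0^3*n1^2 + (-2)*x0^2*z0^3*m*n0^3*n1^3 + (-2)*x0^2*z0^2*a*m*n0^4*n1^2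 + (2)*x0^2*z0^2*n0^4*n1^3 + (1)*x0^2*z0*a*n0^5*n1^2 + (2)*x0*y0^2*z0^3*a*m^3*n0^2*n1^2 + (-5)*x0*y0^2*z0^3*m^2*n0^2*n1^3 + (-4)*x0*y0^2*z0^2*a*m^2*n0^3*n1^2 + (5)*x0*y0^2*z0^2*m*n0^3*n1^3 + (2)*x0*y0^2*z0*a*m*n0^4*n1^2 + (-2)*x0*y0*z0^2*a*m*n0^4*n1^2 + (1)*x0*y0*z0^2*n0^4*n1^3 + (2)*x0*y0*z0*a*n0^5*n1^2 + (-2)*x0*z0^3*a*m*n0^4*n1^2 + (1)*x0*z0^3*n0^4*n1^3 + (2)*x0*z0^2*a*n0^5*n1^2 + (-1)*y0^2*z0^3*a*m^2*n0^3*n1^2 + (2)*y0^2*z0^3*m*n0^3*n1^3 + (1)*y0^2*z0^2*a*m*n0^4*n1^2 + (1)*y0*z0^2*a*n0^5*n1^2 + (1)*z0^3*a*n0^5*n1^2) * hA + ((-1)*x0^3*y0*z0^2*m^3*n1^4 + (2)*x0^3*y0*z0*m^2*n0*n1^4 + (-1)*x0^3*y0*m*n0^2*n1^4 + (-1)*x0^3*z0^2*m^2*n0*n1^4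 + (2)*x0^3*z0*m*n0^2*n1^4 + (-1)*x0^3*n0^3*n1^4 + (3)*x0^2*y0*z0^2*m^2*n0*n1^4 + (-4)*x0^2*y0*z0*m*n0^2*n1^4 + (1)*x0^2*y0*n0^3*n1^4 + (2)*x0^2*z0^2*m*n0^2*n1^4 + (-2)*x0^2*z0*n0^3*n1^4 + (-3)*x0*y0*z0^2*m*n0^2*n1^4 + (2)*x0*y0*z0*n0^3*n1^4 + (-1)*x0*z0^2*n0^3*n1^4 + (1)*y0*z0^2*n0^3*n1^4) * hE0
  have hTd : d*(n0^2*(y0+z0)) - y0^2*n1^2 = 0 :=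
    (mul_eq_zero.mp hTd0).resolve_right
      (mul_ne_zero (mul_ne_zero hDne (pow_ne_zero 2 hn0')) (pow_ne_zero 2 hYdne))
  have hTb0 : (b*(n0*(y0+z0)) - y0*n1*(2*y0+z0)) *
      ((m*a-n1) * n0^2 * (m*x0*z0 - n0*(x0+z0))^3) = 0 := by
    linear_combination ((1)*x0^2*y0*z0^2*a*m^3*n0^3 + (-1)*x0^2*y0*z0^2*m^2*n0^3*n1 + (-2)*x0^2*y0*z0*a*m^2*n0^4 + (2)*x0^2*y0*z0*m*n0^4*n1 + (1)*x0^2*y0*a*m*n0^5 + (-1)*x0^2*y0*n0^5*n1 + (1)*x0^2*z0^3*a*m^3*n0^3 + (-1)*x0^2*z0^3*m^2*n0^3*n1 + (-2)*x0^2*z0^2*a*m^2*n0^4 + (2)*x0^2*z0^2*m*n0^4*n1 + (1)*x0^2*z0*a*m*n0^5 + (-1)*x0^2*z0*n0^5*n1 + (-2)*x0*y0*z0^2*a*m^2*n0^4 + (2)*x0*y0*z0^2*m*n0^4*n1 + (2)*x0*y0*z0*a*m*n0^5 + (-2)*x0*y0*z0*n0^5*n1 + (-2)*x0*z0^3*a*m^2*n0^4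 + (2)*x0*z0^3*m*n0^4*n1 + (2)*x0*z0^2*a*m*n0^5 + (-2)*x0*z0^2*n0^5*n1 + (1)*y0*z0^2*a*m*n0^5 + (-1)*y0*z0^2*n0^5*n1 + (1)*z0^3*a*m*n0^5 + (-1)*z0^3*n0^5*n1) * hE1 + ((-1)*x0^3*y0^2*z0^2*m^3*n0^3 + (2)*x0^3*y0^2*z0*m^2*n0^4 + (-1)*x0^3*y0^2*m*n0^5 + (-1)*x0^3*y0*z0^3*m^3*n0^3 + (3)*x0^3*y0*z0^2*m^2*n0^4 + (-3)*x0^3*y0*z0*m*n0^5 + (1)*x0^3*y0*n0^6 + (1)*x0^3*z0^3*m^2*n0^4 + (-2)*x0^3*z0^2*m*n0^5 + (1)*x0^3*z0*n0^6 + (3)*x0^2*y0^2*z0^2*m^2*n0^4 + (-4)*x0^2*y0^2*z0*m*n0^5 + (1)*x0^2*y0^2*n0^6 + (3)*x0^2*y0*z0^3*m^2*n0^4 + (-6)*x0^2*y0*z0^2*m*n0^5 + (3)*x0^2*y0*z0*n0^6 + (-2)*x0^2*z0^3*m*n0^5 + (2)*x0^2*z0^2*n0^6 + (-3)*x0*y0^2*z0^2*m*n0^5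 + (2)*x0*y0^2*z0*n0^6 + (-3)*x0*y0*z0^3*m*n0^5 + (3)*x0*y0*z0^2*n0^6 + (1)*x0*z0^3*n0^6 + (1)*y0^2*z0^2*n0^6 + (1)*y0*z0^3*n0^6) * hK + ((-3)*x0^3*y0^2*z0^3*m^4*n0*n1 + (9)*x0^3*y0^2*z0^2*m^3*n0^2*n1 + (-9)*x0^3*y0^2*z0*m^2*n0^3*n1 + (3)*x0^3*y0^2*m*n0^4*n1 + (-2)*x0^3*y0*z0^4*m^4*n0*n1 + (8)*x0^3*y0*z0^3*m^3*n0^2*n1 + (-9)*x0^3*y0*z0^2*m^2*n0^3*n1 + (2)*x0^3*y0*z0*m*n0^4*n1 + (1)*x0^3*y0*n0^5*n1 + (2)*x0^3*z0^4*m^3*n0^2*n1 + (-3)*x0^3*z0^3*m^2*n0^3*n1 + (1)*x0^3*z0*n0^5*n1 + (-1)*x0^2*y0^2*z0^3*a*m^4*n0^2 + (10)*x0^2*y0^2*z0^3*m^3*n0^2*n1 + (3)*x0^2*y0^2*z0^2*a*m^3*n0^3 + (-20)*x0^2*y0^2*z0^2*m^2*n0^3*n1 + (-3)*x0^2*y0^2*z0*a*m^2*n0^4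 + (10)*x0^2*y0^2*z0*m*n0^4*n1 + (1)*x0^2*y0^2*a*m*n0^5 + (-1)*x0^2*y0*z0^4*a*m^4*n0^2 + (7)*x0^2*y0*z0^4*m^3*n0^2*n1 + (4)*x0^2*y0*z0^3*a*m^3*n0^3 + (-19)*x0^2*y0*z0^3*m^2*n0^3*n1 + (-5)*x0^2*y0*z0^2*a*m^2*n0^4 + (11)*x0^2*y0*z0^2*m*n0^4*n1 + (2)*x0^2*y0*z0*a*m*n0^5 + (1)*x0^2*y0*z0*n0^5*n1 + (1)*x0^2*z0^4*a*m^3*n0^3 + (-5)*x0^2*z0^4*m^2*n0^3*n1 + (-2)*x0^2*z0^3*a*m^2*n0^4 + (4)*x0^2*z0^3*m*n0^4*n1 + (1)*x0^2*z0^2*a*m*n0^5 + (1)*x0^2*z0^2*n0^5*n1 + (2)*x0*y0^2*z0^3*a*m^3*n0^3 + (-11)*x0*y0^2*z0^3*m^2*n0^3*n1 + (-4)*x0*y0^2*z0^2*a*m^2*n0^4 + (11)*x0*y0^2*z0^2*m*n0^4*n1 + (2)*x0*y0^2*z0*a*m*n0^5 + (2)*x0*y0*z0^4*a*m^3*n0^3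 + (-8)*x0*y0*z0^4*m^2*n0^3*n1 + (-6)*x0*y0*z0^3*a*m^2*n0^4 + (12)*x0*y0*z0^3*m*n0^4*n1 + (4)*x0*y0*z0^2*a*m*n0^5 + (-1)*x0*y0*z0^2*n0^5*n1 + (-2)*x0*z0^4*a*m^2*n0^4 + (4)*x0*z0^4*m*n0^4*n1 + (2)*x0*z0^3*a*m*n0^5 + (-1)*x0*z0^3*n0^5*n1 + (-1)*y0^2*z0^3*a*m^2*n0^4 + (4)*y0^2*z0^3*m*n0^4*n1 + (1)*y0^2*z0^2*a*m*n0^5 + (-1)*y0*z0^4*a*m^2*n0^4 + (3)*y0*z0^4*m*n0^4*n1 + (2)*y0*z0^3*a*m*n0^5 + (-1)*y0*z0^3*n0^5*n1 + (1)*z0^4*a*m*n0^5 + (-1)*z0^4*n0^5*n1) * hA + ((-3)*x0^3*y0*z0^2*m^3*n0*n1^2 + (6)*x0^3*y0*z0*m^2*n0^2*n1^2 + (-3)*x0^3*y0*m*n0^3*n1^2 + (-2)*x0^3*z0^3*m^3*n0*n1^2 + (3)*x0^3*z0^2*m^2*n0^2*n1^2 + (-1)*x0^3*n0^4*n1^2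 + (9)*x0^2*y0*z0^2*m^2*n0^2*n1^2 + (-12)*x0^2*y0*z0*m*n0^3*n1^2 + (3)*x0^2*y0*n0^4*n1^2 + (6)*x0^2*z0^3*m^2*n0^2*n1^2 + (-6)*x0^2*z0^2*m*n0^3*n1^2 + (-9)*x0*y0*z0^2*m*n0^3*n1^2 + (6)*x0*y0*z0*n0^4*n1^2 + (-6)*x0*z0^3*m*n0^3*n1^2 + (3)*x0*z0^2*n0^4*n1^2 + (3)*y0*z0^2*n0^4*n1^2 + (2)*z0^3*n0^4*n1^2) * hE0
  have hTb : b*(n0*(y0+z0)) - y0*n1*(2*y0+z0) = 0 :=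
    (mul_eq_zero.mp hTb0).resolve_right
      (mul_ne_zero (mul_ne_zero hman (pow_ne_zero 2 hn0')) (pow_ne_zero 3 hYdne))
  refine ⟨?_, ?_, ?_, ?_⟩
  · field_simp
    linear_combination hA
  · field_simp
    linear_combination hTc
  · field_simp
    linear_combination hTb
  · field_simp
    linear_combination hTd


private lemma keyMinus (x0 y0 z0 a b c d m n0 n1 : ℚ)
    (hx0 : 0 < x0) (hy0 : 0 < y0) (hz0 : 0 < z0) (hm : 0 < m) (hn0 : 0 < n0) (hn1 : n1 ≠ 0)
    (ha : a ≠ 0) (hd : d ≠ 0)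
    (hE0 : ((1)*x0*y0*z0*m + (-1)*x0*y0*n0 + (-1)*x0*z0*n0 + (-1)*y0*z0*n0) = 0) (hE1 : ((1)*x0*y0*c*m + (-1)*x0*y0*n1 + (1)*x0*z0*b*m + (-1)*x0*z0*n1 + (-1)*x0*b*n0 + (-1)*x0*c*n0 + (1)*y0*z0*a*m + (-1)*y0*z0*n1 + (-1)*y0*a*n0 + (-1)*y0*c*n0 + (-1)*z0*a*n0 + (-1)*z0*b*n0) = 0) (hE3 : ((1)*x0*c*d*m + (-1)*x0*d*n1 + (1)*z0*a*d*m + (-1)*z0*d*n1 + (1)*a*b*c*m + (-1)*a*b*n1 + (-1)*a*c*n1 + (-1)*a*d*n0 + (-1)*b*c*n1 + (-1)*c*d*n0) = 0)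
    (hK : m*a*c - n1*(a+c) = 0) (hB : m*z0*a - n1*(x0+z0) = 0) :
    a = n1 / m * ((x0 + z0) / z0) ∧ c = n1 / m * ((x0 + z0) / x0) ∧
    b = 2 * y0 * n1 / n0 - n1 / m ∧ d = n1 / n0 * (y0 * n1 / n0 - n1 / m) := by
  have hn0' : n0 ≠ 0 := ne_of_gt hn0
  have hm' : m ≠ 0 := ne_of_gt hm
  have hYd : (m*x0*z0 - n0*(x0+z0)) * y0 = n0*(x0*z0) := by linear_combination hE0
  have hYdne : m*x0*z0 - n0*(x0+z0) ≠ 0 := by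
    intro h; rw [h, zero_mul] at hYd
    exact (by positivity : (0:ℚ) < n0*(x0*z0)).ne' hYd.symm
  have hman : m*a - n1 ≠ 0 := by
    intro h
    exact mul_ne_zero hn1 ha (by linear_combination c*h - hK)
  have he3 : ((1)*x0*d*n1^2 + (1)*z0*a^2*d*m^2 + (-2)*z0*a*d*m*n1 + (1)*z0*d*n1^2 + (-1)*a^2*d*m*n0 + (-1)*a^2*n1^2) = 0 := by
    linear_combination (m*a-n1) * hE3 - ((1)*x0*d*m + (1)*a*b*m + (-1)*a*n1 + (-1)*b*n1 + (-1)*d*n0) * hK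
  have hDne : x0*n1^2 + z0*(m*a-n1)^2 - a^2*m*n0 ≠ 0 := by
    intro h
    have h2 : a^2*n1^2 = 0 := by linear_combination d*h - he3
    exact mul_ne_zero (pow_ne_zero 2 ha) (pow_ne_zero 2 hn1) h2
  have hTc0 : (c*(m*x0) - n1*(x0+z0)) * ((m*a-n1) * (m*z0)) = 0 := by
    linear_combination ((1)*x0*z0*m^2) * hK + ((-1)*z0*m*n1) * hB
  have hTc : c*(m*x0) - n1*(x0+z0) = 0 :=
    (mul_eq_zero.mp hTc0).resolve_right
      (mul_ne_zero hman (mul_ne_zero hm' (ne_of_gt hz0)))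
  have hTd0 : (d*(n0^2*m) - n1^2*(m*y0-n0)) *
      ((x0*n1^2 + z0*(m*a-n1)^2 - a^2*m*n0) * (m*z0)^2 * (m*x0*z0 - n0*(x0+z0))) = 0 := by
    linear_combination ((1)*x0*z0^3*m^4*n0^2 + (-1)*x0*z0^2*m^3*n0^3 + (-1)*z0^3*m^3*n0^3) * he3 + ((-1)*x0^2*y0*z0^2*m^4*n1^3 + (2)*x0^2*y0*z0*m^3*n0*n1^3 + (-1)*x0^2*y0*m^2*n0^2*n1^3 + (1)*x0^2*z0^2*m^3*n0*n1^3 + (-1)*x0^2*z0*m^2*n0^2*n1^3 + (-1)*x0*y0*z0^3*a*m^5*n1^2 + (1)*x0*y0*z0^3*m^4*n1^3 + (2)*x0*y0*z0^2*a*m^4*n0*n1^2 + (1)*x0*y0*z0^2*m^3*n0*n1^3 + (-1)*x0*y0*z0*a*m^3*n0^2*n1^2 + (-2)*x0*y0*z0*m^2*n0^2*n1^3 + (1)*x0*z0^3*a*m^4*n0*n1^2 + (-1)*x0*z0^3*m^3*n0*n1^3 + (-1)*x0*z0^2*a*m^3*n0^2*n1^2 + (1)*y0*z0^3*a*m^4*n0*n1^2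 + (-1)*y0*z0^3*m^3*n0*n1^3 + (-1)*y0*z0^2*a*m^3*n0^2*n1^2 + (-1)*y0*z0^2*m^2*n0^2*n1^3 + (-1)*z0^3*a*m^3*n0^2*n1^2 + (1)*z0^3*m^2*n0^2*n1^3) * hB + ((-1)*x0^2*z0*m^3*n1^4 + (1)*x0^2*m^2*n0*n1^4 + (-1)*x0*z0^2*m^3*n1^4 + (2)*x0*z0*m^2*n0*n1^4 + (1)*z0^2*m^2*n0*n1^4) * hE0
  have hTd : d*(n0^2*m) - n1^2*(m*y0-n0) = 0 :=
    (mul_eq_zero.mp hTd0).resolve_right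
      (mul_ne_zero (mul_ne_zero hDne (pow_ne_zero 2 (mul_ne_zero hm' (ne_of_gt hz0)))) hYdne)
  have hTb0 : (b*(n0*m) - (2*y0*n1*m - n1*n0)) *
      ((m*a-n1) * (m*z0)^2 * (m*x0*z0 - n0*(x0+z0))^2) = 0 := by
    linear_combination ((1)*x0*z0^3*a*m^5*n0 + (-1)*x0*z0^3*m^4*n0*n1 + (-1)*x0*z0^2*a*m^4*n0^2 + (1)*x0*z0^2*m^3*n0^2*n1 + (-1)*z0^3*a*m^4*n0^2 + (1)*z0^3*m^3*n0^2*n1) * hE1 + ((-1)*x0^2*y0*z0^3*m^5*n0 + (1)*x0^2*y0*z0^2*m^4*n0^2 + (1)*x0^2*z0^3*m^4*n0^2 + (-1)*x0^2*z0^2*m^3*n0^3 + (2)*x0*y0*z0^3*m^4*n0^2 + (-1)*x0*y0*z0^2*m^3*n0^3 + (-1)*x0*z0^3*m^3*n0^3 + (-1)*y0*z0^3*m^3*n0^3) * hK + ((-2)*x0^2*y0*z0^3*m^5*n1 + (3)*x0^2*y0*z0^2*m^4*n0*n1 + (-1)*x0^2*y0*m^2*n0^3*n1 + (2)*x0^2*z0^3*m^4*n0*n1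 + (-1)*x0^2*z0^2*m^3*n0^2*n1 + (-1)*x0^2*z0*m^2*n0^3*n1 + (-1)*x0*y0*z0^3*a*m^5*n0 + (5)*x0*y0*z0^3*m^4*n0*n1 + (2)*x0*y0*z0^2*a*m^4*n0^2 + (-3)*x0*y0*z0^2*m^3*n0^2*n1 + (-1)*x0*y0*z0*a*m^3*n0^3 + (-2)*x0*y0*z0*m^2*n0^3*n1 + (1)*x0*z0^3*a*m^4*n0^2 + (-3)*x0*z0^3*m^3*n0^2*n1 + (-1)*x0*z0^2*a*m^3*n0^3 + (1)*y0*z0^3*a*m^4*n0^2 + (-3)*y0*z0^3*m^3*n0^2*n1 + (-1)*y0*z0^2*a*m^3*n0^3 + (-1)*y0*z0^2*m^2*n0^3*n1 + (-1)*z0^3*a*m^3*n0^3 + (1)*z0^3*m^2*n0^3*n1) * hB + ((-2)*x0^2*z0^2*m^4*n1^2 + (1)*x0^2*z0*m^3*n0*n1^2 + (1)*x0^2*m^2*n0^2*n1^2 + (1)*x0*z0^2*m^3*n0*n1^2 + (2)*x0*z0*m^2*n0^2*n1^2 + (1)*z0^2*m^2*n0^2*n1^2) * hE0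
  have hTb : b*(n0*m) - (2*y0*n1*m - n1*n0) = 0 :=
    (mul_eq_zero.mp hTb0).resolve_right
      (mul_ne_zero (mul_ne_zero hman (pow_ne_zero 2 (mul_ne_zero hm' (ne_of_gt hz0)))) (pow_ne_zero 2 hYdne))
  refine ⟨?_, ?_, ?_, ?_⟩
  · field_simp
    linear_combination hB
  · field_simp
    linear_combination hTc
  · field_simp
    linear_combination hTb
  · field_simp
    linear_combination hTd


private lemma scalarMain (x0 y0 z0 a b c d m n0 n1 : ℚ)
    (hm : 0 < m) (hn0 : 0 < n0) (hn1 : 0 < n1)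
    (hx0 : 0 < x0) (hy0 : 0 < y0) (hz0 : 0 < z0)
    (ha : a ≠ 0) (hc : c ≠ 0) (hd : d ≠ 0)
    (hq : ∀ q : ℚ, m * ((x0 + a*q) * (y0 + b*q + d*q^2) * (z0 + c*q)) =
      (n0 + n1*q) * ((x0 + a*q) * (y0 + b*q + d*q^2) + (x0 + a*q) * (z0 + c*q) +
        (y0 + b*q + d*q^2) * (z0 + c*q))) :
    (a = x0 * (n1 / n0) ∧ c = n1 / n0 * (y0 * z0 / (y0 + z0)) ∧
     b = y0 * (n1 / n0) * (1 + y0 / (y0 + z0)) ∧ d = (y0 * n1 / n0) ^ 2 * (1 / (y0 + z0))) ∨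
    (c = z0 * (n1 / n0) ∧ a = n1 / n0 * (y0 * x0 / (y0 + x0)) ∧
     b = y0 * (n1 / n0) * (1 + y0 / (y0 + x0)) ∧ d = (y0 * n1 / n0) ^ 2 * (1 / (y0 + x0))) ∨
    (a = n1 / m * ((x0 + z0) / z0) ∧ c = n1 / m * ((x0 + z0) / x0) ∧
     b = 2 * y0 * n1 / n0 - n1 / m ∧ d = n1 / n0 * (y0 * n1 / n0 - n1 / m)) := by
  have h0 := hq 0
  have h1 := hq 1
  have h2 := hq 2
  have h3 := hq 3
  have h4 := hq 4
  have hE0 : ((1)*x0*y0*z0*m + (-1)*x0*y0*n0 + (-1)*x0*z0*n0 + (-1)*y0*z0*n0) = 0 := by linear_combination h0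
  have hE1 : ((1)*x0*y0*c*m + (-1)*x0*y0*n1 + (1)*x0*z0*b*m + (-1)*x0*z0*n1 + (-1)*x0*b*n0 + (-1)*x0*c*n0 + (1)*y0*z0*a*m + (-1)*y0*z0*n1 + (-1)*y0*a*n0 + (-1)*y0*c*n0 + (-1)*z0*a*n0 + (-1)*z0*b*n0) = 0 := by
    linear_combination (-25/12)*h0 + 4*h1 - 3*h2 + (4/3)*h3 - (1/4)*h4
  have hE2 : ((1)*x0*z0*d*m + (1)*x0*b*c*m + (-1)*x0*b*n1 + (-1)*x0*c*n1 + (-1)*x0*d*n0 + (1)*y0*a*c*m + (-1)*y0*a*n1 + (-1)*y0*c*n1 + (1)*z0*a*b*m + (-1)*z0*a*n1 + (-1)*z0*b*n1 + (-1)*z0*d*n0 + (-1)*a*b*n0 + (-1)*a*c*n0 + (-1)*b*c*n0) = 0 := by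
    linear_combination (35/24)*h0 - (13/3)*h1 + (19/4)*h2 - (7/3)*h3 + (11/24)*h4
  have hE3 : ((1)*x0*c*d*m + (-1)*x0*d*n1 + (1)*z0*a*d*m + (-1)*z0*d*n1 + (1)*a*b*c*m + (-1)*a*b*n1 + (-1)*a*c*n1 + (-1)*a*d*n0 + (-1)*b*c*n1 + (-1)*c*d*n0) = 0 := by
    linear_combination (-5/12)*h0 + (3/2)*h1 - 2*h2 + (7/6)*h3 - (1/4)*h4
  have hE4 : (m*a*c - n1*(a+c))*d = 0 := by
    linear_combination (1/24)*h0 - (1/6)*h1 + (1/4)*h2 - (1/6)*h3 + (1/24)*h4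
  have hK : m*a*c - n1*(a+c) = 0 := (mul_eq_zero.mp hE4).resolve_right hd
  rcases keySplit x0 y0 z0 a b c d m n0 n1 (ne_of_gt hm) (ne_of_gt hn1) ha
      hE0 hE1 hE2 hE3 hK with hA | hC | hB
  · exact Or.inl (keyPlus x0 y0 z0 a b c d m n0 n1 hx0 hy0 hz0 hn0 (ne_of_gt hn1) ha hd
      hE0 hE1 hE3 hK hA)
  · refine Or.inr (Or.inl (keyPlus z0 y0 x0 c b a d m n0 n1 hz0 hy0 hx0 hn0 (ne_of_gt hn1) hc hd
      (by linear_combination hE0) (by linear_combination hE1) (by linear_combination hE3)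
      (by linear_combination hK) (by linear_combination hC)))
  · exact Or.inr (Or.inr (keyMinus x0 y0 z0 a b c d m n0 n1 hx0 hy0 hz0 hm hn0 (ne_of_gt hn1) ha hd
      hE0 hE1 hE3 hK hB))


/-- Lemma 6: a rational polynomial solution of (2) with `deg x = deg z = 1` and
`deg y = 2` is, possibly after interchanging `x` and `z`, exactly one of the
two displayed families (the '+' solution (5) or the '−' solution (6)),
where `x₀, y₀, z₀` are the values at `λ = 0`. -/
theorem lemma6 (m n₀ n₁ : ℤ) (hm : 0 < m) (hn₀ : 0 < n₀) (hn₁ : 0 < n₁)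
    (x y z : Polynomial ℚ) (hsol : IsRatPolySolution m n₀ n₁ x y z)
    (hx : x.natDegree = 1) (hz : z.natDegree = 1) (hy : y.natDegree = 2) :
    ∃ x' z' : Polynomial ℚ, ((x' = x ∧ z' = z) ∨ (x' = z ∧ z' = x)) ∧
      (let x₀ : ℚ := x'.eval 0
       let z₀ : ℚ := z'.eval 0
       let y₀ : ℚ := y.eval 0
       -- the '+' solution, equations (5a)-(5c)
       (x' = C x₀ + C (x₀ * ((n₁ : ℚ) / (n₀ : ℚ))) * X ∧
        z' = C z₀ + C (((n₁ : ℚ) / (n₀ : ℚ)) * (y₀ * z₀ / (y₀ + z₀))) * X ∧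
        y = C y₀ + C (y₀ * ((n₁ : ℚ) / (n₀ : ℚ)) * (1 + y₀ / (y₀ + z₀))) * X +
              C ((y₀ * (n₁ : ℚ) / (n₀ : ℚ)) ^ 2 * (1 / (y₀ + z₀))) * X ^ 2) ∨
       -- the '−' solution, equations (6a)-(6c)
       (x' = C x₀ + C (((n₁ : ℚ) / (m : ℚ)) * ((x₀ + z₀) / z₀)) * X ∧
        z' = C z₀ + C (((n₁ : ℚ) / (m : ℚ)) * ((x₀ + z₀) / x₀)) * X ∧
        y = C y₀ + C (2 * y₀ * (n₁ : ℚ) / (n₀ : ℚ) - (n₁ : ℚ) / (m : ℚ)) * X +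
              C (((n₁ : ℚ) / (n₀ : ℚ)) *
                 (y₀ * (n₁ : ℚ) / (n₀ : ℚ) - (n₁ : ℚ) / (m : ℚ))) * X ^ 2)) := by
  obtain ⟨hxpos, hypos, hzpos, heq⟩ := hsol
  have hxne : x ≠ 0 := fun h => by simp [h] at hx
  have hzne : z ≠ 0 := fun h => by simp [h] at hz
  have hyne : y ≠ 0 := fun h => by simp [h] at hy
  have hane : x.coeff 1 ≠ 0 := by
    have := Polynomial.leadingCoeff_ne_zero.mpr hxne
    rwa [Polynomial.leadingCoeff, hx] at this
  have hcne : z.coeff 1 ≠ 0 := by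
    have := Polynomial.leadingCoeff_ne_zero.mpr hzne
    rwa [Polynomial.leadingCoeff, hz] at this
  have hdne : y.coeff 2 ≠ 0 := by
    have := Polynomial.leadingCoeff_ne_zero.mpr hyne
    rwa [Polynomial.leadingCoeff, hy] at this
  obtain ⟨x0, a, hxrep, hxev, hane⟩ : ∃ x0 a : ℚ,
      x = C x0 + C a * X ∧ x.eval 0 = x0 ∧ a ≠ 0 :=
    ⟨x.coeff 0, x.coeff 1, rep_deg1 x hx.le, (Polynomial.coeff_zero_eq_eval_zero x).symm, hane⟩
  obtain ⟨z0, c, hzrep, hzev, hcne⟩ : ∃ z0 c : ℚ,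
      z = C z0 + C c * X ∧ z.eval 0 = z0 ∧ c ≠ 0 :=
    ⟨z.coeff 0, z.coeff 1, rep_deg1 z hz.le, (Polynomial.coeff_zero_eq_eval_zero z).symm, hcne⟩
  obtain ⟨y0, b, dd, hyrep, hyev, hdne⟩ : ∃ y0 b dd : ℚ,
      y = C y0 + C b * X + C dd * X ^ 2 ∧ y.eval 0 = y0 ∧ dd ≠ 0 :=
    ⟨y.coeff 0, y.coeff 1, y.coeff 2, rep_deg2 y hy.le,
      (Polynomial.coeff_zero_eq_eval_zero y).symm, hdne⟩
  have hx0 : 0 < x0 := by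
    have := hxpos 0; rwa [Nat.cast_zero, hxev] at this
  have hz0 : 0 < z0 := by
    have := hzpos 0; rwa [Nat.cast_zero, hzev] at this
  have hy0 : 0 < y0 := by
    have := hypos 0; rwa [Nat.cast_zero, hyev] at this
  have hq : ∀ q : ℚ, (m:ℚ) * ((x0 + a*q) * (y0 + b*q + dd*q^2) * (z0 + c*q)) =
      ((n₀:ℚ) + (n₁:ℚ)*q) * ((x0 + a*q) * (y0 + b*q + dd*q^2) + (x0 + a*q) * (z0 + c*q) +
        (y0 + b*q + dd*q^2) * (z0 + c*q)) := by
    intro q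
    have h := congrArg (Polynomial.eval q) heq
    rw [hxrep, hyrep, hzrep] at h
    simp only [Polynomial.eval_add, Polynomial.eval_mul, Polynomial.eval_pow,
      Polynomial.eval_C, Polynomial.eval_X] at h
    linear_combination h
  have hm' : (0:ℚ) < (m:ℚ) := by exact_mod_cast hm
  have hn0' : (0:ℚ) < (n₀:ℚ) := by exact_mod_cast hn₀
  have hn1' : (0:ℚ) < (n₁:ℚ) := by exact_mod_cast hn₁
  rcases scalarMain x0 y0 z0 a b c dd (m:ℚ) (n₀:ℚ) (n₁:ℚ) hm' hn0' hn1' hx0 hy0 hz0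
      hane hcne hdne hq with ⟨h1, h2, h3, h4⟩ | ⟨h1, h2, h3, h4⟩ | ⟨h1, h2, h3, h4⟩
  · refine ⟨x, z, Or.inl ⟨rfl, rfl⟩, ?_⟩
    dsimp only
    rw [hxev, hzev, hyev]
    exact Or.inl ⟨by rw [hxrep, h1], by rw [hzrep, h2], by rw [hyrep, h3, h4]⟩
  · refine ⟨z, x, Or.inr ⟨rfl, rfl⟩, ?_⟩
    dsimp only
    rw [hxev, hzev, hyev]
    exact Or.inl ⟨by rw [hzrep, h1], by rw [hxrep, h2], by rw [hyrep, h3, h4]⟩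
  · refine ⟨x, z, Or.inl ⟨rfl, rfl⟩, ?_⟩
    dsimp only
    rw [hxev, hzev, hyev]
    exact Or.inr ⟨by rw [hxrep, h1], by rw [hzrep, h2], by rw [hyrep, h3, h4]⟩
end

section
/- (The '−' solution is never integral when m does not divide n₁.) Let m, n₀, n₁ be positive integers with gcd(n₀, n₁) = 1 and m not dividing n₁, and let x₀, y₀, z₀ be positive rationals with m/n₀ = 1/x₀ + 1/y₀ + 1/z₀. Then the polynomials x(λ) = x₀ + (n₁/m)·((x₀+z₀)/z₀)·λ, z(λ) = z₀ + (n₁/m)·((x₀+z₀)/x₀)·λ, y(λ) = y₀ + (2·y₀·n₁/n₀ − n₁/m)·λ + (n₁/n₀)·(y₀·n₁/n₀ − n₁/m)·λ² cannot all have integer coefficients. -/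
open Polynomial

/-- The '−' solution is never integral when `m` does not divide `n₁`:
its three polynomials cannot all have integer coefficients. -/
theorem minus_solution_not_integral (m n₀ n₁ : ℤ)
    (hm : 0 < m) (hn₀ : 0 < n₀) (hn₁ : 0 < n₁)
    (hcop : Int.gcd n₀ n₁ = 1) (hndvd : ¬ m ∣ n₁)
    (x₀ y₀ z₀ : ℚ) (hx₀ : 0 < x₀) (hy₀ : 0 < y₀) (hz₀ : 0 < z₀)
    (heq : (m : ℚ) / (n₀ : ℚ) = 1 / x₀ + 1 / y₀ + 1 / z₀) :
    ¬ ((∀ i : ℕ, ∃ c : ℤ,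
          (C x₀ + C (((n₁ : ℚ) / (m : ℚ)) * ((x₀ + z₀) / z₀)) * X).coeff i = (c : ℚ)) ∧
       (∀ i : ℕ, ∃ c : ℤ,
          (C y₀ + C (2 * y₀ * (n₁ : ℚ) / (n₀ : ℚ) - (n₁ : ℚ) / (m : ℚ)) * X +
           C (((n₁ : ℚ) / (n₀ : ℚ)) *
              (y₀ * (n₁ : ℚ) / (n₀ : ℚ) - (n₁ : ℚ) / (m : ℚ))) * X ^ 2).coeff i = (c : ℚ)) ∧
       (∀ i : ℕ, ∃ c : ℤ,
          (C z₀ + C (((n₁ : ℚ) / (m : ℚ)) * ((x₀ + z₀) / x₀)) * X).coeff i = (c : ℚ))) := by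
  rintro ⟨-, hy, -⟩
  obtain ⟨c₀, hc₀⟩ := hy 0
  obtain ⟨c₁, hc₁⟩ := hy 1
  obtain ⟨c₂, hc₂⟩ := hy 2
  simp only [coeff_add, coeff_C_mul, mul_coeff_zero, coeff_C, coeff_X_zero, coeff_X_one,
    coeff_X_pow, if_pos, if_neg, mul_zero, mul_one, add_zero, zero_add, coeff_ofNat_zero,
    coeff_X, coeff_one] at hc₀ hc₁ hc₂
  norm_num at hc₀ hc₁ hc₂
  have hmQ : (m : ℚ) ≠ 0 := by positivity
  have hnQ : (n₀ : ℚ) ≠ 0 := by positivity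
  -- E1 : m ∣ n₀ * n₁
  have E1 : (2 * c₀ * n₁ - c₁ * n₀) * m = n₁ * n₀ := by
    have : ((2 * c₀ * n₁ - c₁ * n₀ : ℤ) : ℚ) * (m : ℚ) = (n₁ : ℚ) * (n₀ : ℚ) := by
      push_cast
      field_simp at hc₁
      linear_combination hc₁ - 2 * (n₁ : ℚ) * (m : ℚ) * hc₀
    exact_mod_cast this
  -- E2 : m ∣ n₁ ^ 2
  have E2 : (n₁ * c₁ - 2 * n₀ * c₂) * m = n₁ ^ 2 := by
    have h2 : ((n₁ * c₁ - 2 * n₀ * c₂) * m) * n₀ ^ 2 = n₁ ^ 2 * n₀ ^ 2 := by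
      have : (((n₁ * c₁ - 2 * n₀ * c₂) * m : ℤ) : ℚ) * (n₀ : ℚ) ^ 2
          = ((n₁ : ℚ)) ^ 2 * (n₀ : ℚ) ^ 2 := by
        push_cast
        field_simp at hc₁ hc₂
        linear_combination -(n₀ : ℚ) * (n₁ : ℚ) * hc₁ + 2 * (n₀ : ℚ) * hc₂
      exact_mod_cast this
    exact mul_right_cancel₀ (pow_ne_zero 2 hn₀.ne') h2
  have d1 : m ∣ n₀ * n₁ := ⟨2 * c₀ * n₁ - c₁ * n₀, by linarith [E1]⟩
  have d2 : m ∣ n₁ * n₁ := ⟨n₁ * c₁ - 2 * n₀ * c₂, by nlinarith [E2]⟩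
  obtain ⟨a, b, hab⟩ := Int.isCoprime_iff_gcd_eq_one.mpr hcop
  apply hndvd
  have : n₁ = a * (n₀ * n₁) + b * (n₁ * n₁) := by linear_combination n₁ * hab.symm
  rw [this]
  exact dvd_add (Dvd.dvd.mul_left d1 a) (Dvd.dvd.mul_left d2 b)
end
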